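/- arXiv:2208.14299 — 5 statements merged into one kernel-verified Lean document; each statement's English description precedes it below -/
import Mathlib

section
/- Let ξ₀ : ℝ^d → [a,b] be lower semicontinuous with −1/2 ≤ a ≤ b ≤ +∞ and set ξ_t := P_t ξ₀. Then for every t ∈ (0,1) the function ξ_t is well defined and satisfies −1/(2(1−t)) ≤ P_a(t) ≤ ξ_t(x) ≤ P_b(t) ≤ 1/(2t) for every x ∈ ℝ^d. Moreover, for t ∈ (0,1) and x ∈ ℝ^d one has ξ₀(x) = −1/2 if and only if ξ_t(x) = −1/(2(1−t)). -/
noncomputable section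

open scoped Classical

/-- The truncated cosine `cos_{π/2}(r) = cos (min r (π/2))`. -/
def coshalf (r : ℝ) : ℝ := Real.cos (min r (Real.pi / 2))

/-- Division of a nonnegative real by an extended real, with the conventions
`c/⊤ = 0` and `c/0 = ⊤` for `c > 0`. -/
def qdiv (c : ℝ) (b : EReal) : EReal :=
  if b = ⊤ then 0
  else if b = 0 then (if 0 < c then ⊤ else 0)
  else ((c / b.toReal : ℝ) : EReal)

/-- The integrand in the generalized Hopf–Lax formula. -/
def hlIntegrand {d : ℕ} (t : ℝ) (ξ : EuclideanSpace ℝ (Fin d) → EReal)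
    (x y : EuclideanSpace ℝ (Fin d)) : EReal :=
  ((1 / (2 * t) : ℝ) : EReal) *
    (1 - qdiv (coshalf ‖x - y‖ ^ 2) (1 + ((2 * t : ℝ) : EReal) * ξ y))

/-- The generalized Hopf–Lax operator `P_t`, with `P_0 ξ = ξ`. -/
def hopfLax {d : ℕ} (t : ℝ) (ξ : EuclideanSpace ℝ (Fin d) → EReal)
    (x : EuclideanSpace ℝ (Fin d)) : EReal :=
  if t = 0 then ξ x else ⨅ y, hlIntegrand t ξ x y

/-- `P_a(t) = a / (1 + 2 a t)`, with `P_{+∞}(t) = 1/(2t)`. -/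
def Pconst (a : EReal) (t : ℝ) : EReal :=
  if a = ⊤ then ((1 / (2 * t) : ℝ) : EReal)
  else ((a.toReal / (1 + 2 * a.toReal * t) : ℝ) : EReal)

/-!
Write `c = cos_{π/2}(|x - y|)² ∈ [0, 1]` and `s = ξ₀(y) ≥ -1/2`. The integrand
`(1/(2t)) (1 - c/(1 + 2ts))` is antitone in `c`, monotone in `s`, and equals `P_s(t)` at `c = 1`.
Hence `ξ_t ≥ P_a(t)`, while the choice `y = x` gives `ξ_t(x) ≤ P_{ξ₀(x)}(t) ≤ P_b(t)`; the
outer bounds are monotonicity of `s ↦ P_s(t)` between `P_{-1/2}(t) = -1/(2(1-t))` and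
`P_{+∞}(t)`. If `ξ₀(x) > -1/2`, lower semicontinuity gives `ξ₀ > δ > -1/2` on a ball of radius
`r` around `x`; outside it `c ≤ cos_{π/2}(r)² < 1`, so the integrand stays uniformly above
`-1/(2(1-t))`.
-/

open Real

theorem EReal.eq_top_or_exists_coe_of_coe_le {u : ℝ} {s : EReal} (h : (u : EReal) ≤ s) :
    s = ⊤ ∨ ∃ r : ℝ, u ≤ r ∧ s = r := by
  induction s using EReal.rec with
  | bot => exact absurd h (not_le.mpr (EReal.bot_lt_coe u))
  | coe r => exact Or.inr ⟨r, EReal.coe_le_coe_iff.mp h, rfl⟩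
  | top => exact Or.inl rfl

section Coshalf

theorem coshalf_zero : coshalf 0 = 1 := by
  rw [coshalf, min_eq_left (by positivity), cos_zero]

theorem coshalf_sq_le_one (r : ℝ) : coshalf r ^ 2 ≤ 1 :=
  cos_sq_le_one _

theorem coshalf_sq_lt_one {r : ℝ} (hr : 0 < r) : coshalf r ^ 2 < 1 := by
  have hsin : 0 < sin (min r (π / 2)) :=
    sin_pos_of_pos_of_lt_pi (lt_min hr (by positivity))
      ((min_le_right _ _).trans_lt (by linarith [pi_pos]))
  rw [coshalf, cos_sq', sub_lt_self_iff]
  positivity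

theorem coshalf_sq_le_of_le {r₀ r : ℝ} (h₀ : 0 ≤ r₀) (h : r₀ ≤ r) :
    coshalf r ^ 2 ≤ coshalf r₀ ^ 2 := by
  have hmin : 0 ≤ min r (π / 2) := le_min (h₀.trans h) (by positivity)
  have hcos : 0 ≤ cos (min r (π / 2)) :=
    cos_nonneg_of_mem_Icc ⟨by linarith [pi_pos], min_le_right _ _⟩
  refine pow_le_pow_left₀ hcos ?_ 2
  exact cos_le_cos_of_nonneg_of_le_pi (le_min h₀ (by positivity))
    ((min_le_right _ _).trans (by linarith [pi_pos])) (min_le_min_right _ h)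

end Coshalf

section Kernel

variable {t : ℝ}

/-- The Hopf–Lax integrand `(1/(2t)) (1 - c/(1 + 2ts))` as a function of `c = cos_{π/2}(|x-y|)²`
and `s = ξ(y)`. -/
def hlKernel (t c : ℝ) (s : EReal) : EReal :=
  ((1 / (2 * t) : ℝ) : EReal) * (1 - qdiv c (1 + ((2 * t : ℝ) : EReal) * s))

theorem hlKernel_top (ht : 0 < t) (c : ℝ) : hlKernel t c ⊤ = ((1 / (2 * t) : ℝ) : EReal) := by
  have hone : (1 : EReal) ≠ ⊥ := by rw [← EReal.coe_one]; exact EReal.coe_ne_bot 1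
  rw [hlKernel, EReal.coe_mul_top_of_pos (by positivity), EReal.add_top_of_ne_bot hone]
  simp [qdiv]

theorem hlKernel_coe {s : ℝ} (hs : 0 < 1 + 2 * t * s) (c : ℝ) :
    hlKernel t c s = ((1 / (2 * t) * (1 - c / (1 + 2 * t * s)) : ℝ) : EReal) := by
  have hden : (1 : EReal) + ((2 * t : ℝ) : EReal) * s = ((1 + 2 * t * s : ℝ) : EReal) := by
    norm_cast
  rw [hlKernel, hden, qdiv, if_neg (EReal.coe_ne_top _), if_neg (by exact_mod_cast hs.ne'),
    EReal.toReal_coe]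
  norm_cast

theorem one_add_two_mul_pos (ht : 0 < t) (ht1 : t < 1) {s : ℝ} (hs : -1 / 2 ≤ s) :
    0 < 1 + 2 * t * s := by
  nlinarith

theorem hlKernel_anti_left (ht : 0 < t) (ht1 : t < 1) {c c' : ℝ} (hc : c ≤ c') {s : EReal}
    (hs : ((-1 / 2 : ℝ) : EReal) ≤ s) : hlKernel t c' s ≤ hlKernel t c s := by
  rcases EReal.eq_top_or_exists_coe_of_coe_le hs with rfl | ⟨r, hr, rfl⟩
  · rw [hlKernel_top ht, hlKernel_top ht]
  · have hden := one_add_two_mul_pos ht ht1 hr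
    rw [hlKernel_coe hden, hlKernel_coe hden, EReal.coe_le_coe_iff]
    gcongr

theorem hlKernel_mono_right (ht : 0 < t) (ht1 : t < 1) {c : ℝ} (hc : 0 ≤ c) {s s' : EReal}
    (hs : ((-1 / 2 : ℝ) : EReal) ≤ s) (hss' : s ≤ s') :
    hlKernel t c s ≤ hlKernel t c s' := by
  rcases EReal.eq_top_or_exists_coe_of_coe_le hs with rfl | ⟨r, hr, rfl⟩
  · rw [top_le_iff.mp hss']
  rcases EReal.eq_top_or_exists_coe_of_coe_le (hs.trans hss') with rfl | ⟨r', -, rfl⟩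
  · have hden := one_add_two_mul_pos ht ht1 hr
    rw [hlKernel_top ht, hlKernel_coe hden, EReal.coe_le_coe_iff]
    exact mul_le_of_le_one_right (by positivity) (sub_le_self _ (div_nonneg hc hden.le))
  · have hden := one_add_two_mul_pos ht ht1 hr
    have hrr' : r ≤ r' := EReal.coe_le_coe_iff.mp hss'
    rw [hlKernel_coe hden, hlKernel_coe (one_add_two_mul_pos ht ht1 (hr.trans hrr')),
      EReal.coe_le_coe_iff]
    gcongr

theorem neg_inv_lt_hlKernel (ht : 0 < t) (ht1 : t < 1) {c : ℝ} (hc : c ≤ 1) {s : EReal}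
    (hs : ((-1 / 2 : ℝ) : EReal) ≤ s) (hstrict : c < 1 ∨ ((-1 / 2 : ℝ) : EReal) < s) :
    ((-1 / (2 * (1 - t)) : ℝ) : EReal) < hlKernel t c s := by
  have h1t : 0 < 1 - t := by linarith
  rcases EReal.eq_top_or_exists_coe_of_coe_le hs with rfl | ⟨r, hr, rfl⟩
  · rw [hlKernel_top ht, EReal.coe_lt_coe_iff]
    have hlhs : -1 / (2 * (1 - t)) < 0 := div_neg_of_neg_of_pos (by norm_num) (by positivity)
    exact hlhs.trans (by positivity)
  · have hden := one_add_two_mul_pos ht ht1 hr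
    have hkey : c * (1 - t) < 1 + 2 * t * r := by
      rcases hstrict with hc1 | hr1
      · nlinarith
      · have hr1 : -1 / 2 < r := EReal.coe_lt_coe_iff.mp hr1
        nlinarith
    have hlhs : -1 / (2 * (1 - t)) = 1 / (2 * t) * (1 - 1 / (1 - t)) := by
      field_simp
      ring
    rw [hlKernel_coe hden, EReal.coe_lt_coe_iff, hlhs]
    gcongr 1 / (2 * t) * (1 - ?_)
    rwa [div_lt_div_iff₀ hden h1t, one_mul]

theorem Pconst_top (t : ℝ) : Pconst ⊤ t = ((1 / (2 * t) : ℝ) : EReal) :=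
  if_pos rfl

theorem Pconst_coe (r t : ℝ) : Pconst r t = ((r / (1 + 2 * r * t) : ℝ) : EReal) := by
  simp [Pconst]

theorem Pconst_neg_half (t : ℝ) :
    Pconst ((-1 / 2 : ℝ) : EReal) t = ((-1 / (2 * (1 - t)) : ℝ) : EReal) := by
  rw [Pconst_coe, show 1 + 2 * (-1 / 2) * t = 1 - t by ring, div_div]

theorem hlKernel_one (ht : 0 < t) (ht1 : t < 1) {s : EReal} (hs : ((-1 / 2 : ℝ) : EReal) ≤ s) :
    hlKernel t 1 s = Pconst s t := by
  rcases EReal.eq_top_or_exists_coe_of_coe_le hs with rfl | ⟨r, hr, rfl⟩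
  · rw [hlKernel_top ht, Pconst_top]
  · have hden := one_add_two_mul_pos ht ht1 hr
    rw [hlKernel_coe hden, Pconst_coe]
    congr 1
    field_simp
    ring

theorem Pconst_le_hlKernel (ht : 0 < t) (ht1 : t < 1) {c : ℝ} (hc : c ≤ 1) {s : EReal}
    (hs : ((-1 / 2 : ℝ) : EReal) ≤ s) : Pconst s t ≤ hlKernel t c s :=
  hlKernel_one ht ht1 hs ▸ hlKernel_anti_left ht ht1 hc hs

theorem Pconst_mono (ht : 0 < t) (ht1 : t < 1) {a b : EReal} (ha : ((-1 / 2 : ℝ) : EReal) ≤ a)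
    (hab : a ≤ b) : Pconst a t ≤ Pconst b t := by
  rw [← hlKernel_one ht ht1 ha, ← hlKernel_one ht ht1 (ha.trans hab)]
  exact hlKernel_mono_right ht ht1 zero_le_one ha hab

end Kernel

section HopfLax

variable {d : ℕ} {t : ℝ} {ξ : EuclideanSpace ℝ (Fin d) → EReal}
  {x : EuclideanSpace ℝ (Fin d)}

theorem hopfLax_eq_iInf (ht : t ≠ 0) :
    hopfLax t ξ x = ⨅ y, hlKernel t (coshalf ‖x - y‖ ^ 2) (ξ y) :=
  if_neg ht

theorem hopfLax_le_Pconst_self (ht : 0 < t) (ht1 : t < 1) (hx : ((-1 / 2 : ℝ) : EReal) ≤ ξ x) :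
    hopfLax t ξ x ≤ Pconst (ξ x) t := by
  rw [hopfLax_eq_iInf ht.ne', ← hlKernel_one ht ht1 hx]
  calc ⨅ y, hlKernel t (coshalf ‖x - y‖ ^ 2) (ξ y)
      ≤ hlKernel t (coshalf ‖x - x‖ ^ 2) (ξ x) := iInf_le _ x
    _ = hlKernel t 1 (ξ x) := by rw [sub_self, norm_zero, coshalf_zero, one_pow]

theorem Pconst_le_hopfLax (ht : 0 < t) (ht1 : t < 1) {a : EReal}
    (ha : ((-1 / 2 : ℝ) : EReal) ≤ a) (hξ : ∀ y, a ≤ ξ y) :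
    Pconst a t ≤ hopfLax t ξ x := by
  rw [hopfLax_eq_iInf ht.ne']
  refine le_iInf fun y => ?_
  calc Pconst a t ≤ Pconst (ξ y) t := Pconst_mono ht ht1 ha (hξ y)
    _ ≤ _ := Pconst_le_hlKernel ht ht1 (coshalf_sq_le_one _) (ha.trans (hξ y))

theorem neg_inv_lt_hopfLax (ht : 0 < t) (ht1 : t < 1)
    (hξ : ∀ y, ((-1 / 2 : ℝ) : EReal) ≤ ξ y)
    (hlsc : LowerSemicontinuousAt ξ x) (hx : ((-1 / 2 : ℝ) : EReal) < ξ x) :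
    ((-1 / (2 * (1 - t)) : ℝ) : EReal) < hopfLax t ξ x := by
  obtain ⟨δ, hδ, hδx⟩ := EReal.lt_iff_exists_real_btwn.mp hx
  obtain ⟨r, hr, hball⟩ := Metric.eventually_nhds_iff.mp (hlsc δ hδx)
  have hbound : ∀ y,
      min (hlKernel t 1 δ) (hlKernel t (coshalf r ^ 2) ((-1 / 2 : ℝ) : EReal)) ≤
        hlKernel t (coshalf ‖x - y‖ ^ 2) (ξ y) := by
    intro y
    by_cases hy : dist y x < r
    · exact min_le_of_left_le <|
        (hlKernel_mono_right ht ht1 zero_le_one hδ.le (hball hy).le).trans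
          (hlKernel_anti_left ht ht1 (coshalf_sq_le_one _) (hξ y))
    · have hfar : r ≤ ‖x - y‖ := by rw [← dist_eq_norm, dist_comm]; exact not_lt.mp hy
      exact min_le_of_right_le <|
        (hlKernel_mono_right ht ht1 (sq_nonneg _) le_rfl (hξ y)).trans
          (hlKernel_anti_left ht ht1 (coshalf_sq_le_of_le hr.le hfar) (hξ y))
  rw [hopfLax_eq_iInf ht.ne']
  refine lt_of_lt_of_le (lt_min ?_ ?_) (le_iInf hbound)
  · exact neg_inv_lt_hlKernel ht ht1 le_rfl hδ.le (Or.inr hδ)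
  · exact neg_inv_lt_hlKernel ht ht1 (coshalf_sq_le_one r) le_rfl (Or.inl (coshalf_sq_lt_one hr))

end HopfLax

theorem statement_0_general (d : ℕ) (a b : EReal)
    (ha : ((-1 / 2 : ℝ) : EReal) ≤ a)
    (ξ₀ : EuclideanSpace ℝ (Fin d) → EReal)
    (hrange : ∀ x, a ≤ ξ₀ x ∧ ξ₀ x ≤ b)
    (hlsc : LowerSemicontinuous ξ₀) :
    ∀ t : ℝ, 0 < t → t < 1 → ∀ x : EuclideanSpace ℝ (Fin d),
      ((-1 / (2 * (1 - t)) : ℝ) : EReal) ≤ Pconst a t ∧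
      Pconst a t ≤ hopfLax t ξ₀ x ∧
      hopfLax t ξ₀ x ≤ Pconst b t ∧
      Pconst b t ≤ ((1 / (2 * t) : ℝ) : EReal) ∧
      (ξ₀ x = ((-1 / 2 : ℝ) : EReal) ↔
        hopfLax t ξ₀ x = ((-1 / (2 * (1 - t)) : ℝ) : EReal)) := by
  intro t ht ht1 x
  have hξ : ∀ y, ((-1 / 2 : ℝ) : EReal) ≤ ξ₀ y := fun y => ha.trans (hrange y).1
  have hfloor : ((-1 / (2 * (1 - t)) : ℝ) : EReal) ≤ Pconst a t :=
    Pconst_neg_half t ▸ Pconst_mono ht ht1 le_rfl ha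
  have hlower : Pconst a t ≤ hopfLax t ξ₀ x :=
    Pconst_le_hopfLax ht ht1 ha fun y => (hrange y).1
  have hupper : hopfLax t ξ₀ x ≤ Pconst (ξ₀ x) t := hopfLax_le_Pconst_self ht ht1 (hξ x)
  refine ⟨hfloor, hlower, hupper.trans (Pconst_mono ht ht1 (hξ x) (hrange x).2),
    Pconst_top t ▸ Pconst_mono ht ht1 ((hξ x).trans (hrange x).2) le_top,
    ⟨fun hx => ?_, fun hx => ?_⟩⟩
  · refine le_antisymm ?_ (hfloor.trans hlower)
    rw [← Pconst_neg_half t, ← hx]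
    exact hupper
  · by_contra hne
    exact (neg_inv_lt_hopfLax ht ht1 hξ (hlsc x) (lt_of_le_of_ne (hξ x) (Ne.symm hne))).ne' hx

theorem statement_0 (d : ℕ) (hd : 1 ≤ d) (a b : EReal)
    (ha : ((-1 / 2 : ℝ) : EReal) ≤ a) (hab : a ≤ b)
    (ξ₀ : EuclideanSpace ℝ (Fin d) → EReal)
    (hrange : ∀ x, a ≤ ξ₀ x ∧ ξ₀ x ≤ b)
    (hlsc : LowerSemicontinuous ξ₀) :
    ∀ t : ℝ, 0 < t → t < 1 → ∀ x : EuclideanSpace ℝ (Fin d),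
      ((-1 / (2 * (1 - t)) : ℝ) : EReal) ≤ Pconst a t ∧
      Pconst a t ≤ hopfLax t ξ₀ x ∧
      hopfLax t ξ₀ x ≤ Pconst b t ∧
      Pconst b t ≤ ((1 / (2 * t) : ℝ) : EReal) ∧
      (ξ₀ x = ((-1 / 2 : ℝ) : EReal) ↔
        hopfLax t ξ₀ x = ((-1 / (2 * (1 - t)) : ℝ) : EReal)) :=
  statement_0_general d a b ha ξ₀ hrange hlsc
end
end

section
/- Let ξ₀ : ℝ^d → [a,b] be lower semicontinuous with −1/2 ≤ a ≤ b ≤ +∞ and set ξ_t := P_t ξ₀. Then for every t ∈ (0,1) the function ξ_t is real-valued, Lipschitz continuous with Lipschitz constant Λ_a(t), and Λ_a(t)-semi-concave, i.e. the map x ↦ ξ_t(x) − (Λ_a(t)/2)|x|² is concave on ℝ^d; moreover Λ_a(t) ≤ 1/(t(1−t)). -/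
noncomputable section

open scoped Classical

/-- `Λ_a(t) = 1/(t(1+2at))`. -/
def Lam (a t : ℝ) : ℝ := 1 / (t * (1 + 2 * a * t))

/-!
With `μ(y) = 1 / (2t(1 + 2tξ₀(y)))` (and `μ(y) = 0` where `ξ₀(y) = +∞`),
`P_t ξ₀ (x) = inf_y (1/(2t) - μ(y) cos_{π/2}(|x - y|)²)` and `0 ≤ μ ≤ Λ_a(t)/2`, so the infimum is
bounded below by `1/(2t) - Λ_a(t)/2`. Since `cos_{π/2}(r)² = (1 + cos(min(2r, π)))/2` has
derivative `-sin(min(2r, π))`, the map `r ↦ cos_{π/2}(r)²` is 1-Lipschitz and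
`r ↦ cos_{π/2}(r)² + r²` is convex and nondecreasing on `[0, ∞)`. Hence each term is
`Λ_a(t)/2`-Lipschitz and becomes concave after subtracting `Λ_a(t)/2 |x|²`, and both properties pass
to the infimum.
-/

open Real Set
open scoped NNReal

theorem hasDerivAt_cos_min_pi (u : ℝ) :
    HasDerivAt (fun v => cos (min v π)) (-sin (min u π)) u := by
  rcases lt_trichotomy u π with h | rfl | h
  · have hcos : (fun v => cos (min v π)) =ᶠ[nhds u] cos := by
      filter_upwards [Iio_mem_nhds h] with v hv
      rw [min_eq_left hv.le]
    rw [min_eq_left h.le]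
    exact (hasDerivAt_cos u).congr_of_eventuallyEq hcos
  · have hleft : HasDerivWithinAt (fun v => cos (min v π)) (-sin π) (Iic π) π :=
      (hasDerivAt_cos π).hasDerivWithinAt.congr (fun v hv => by rw [min_eq_left hv])
        (by rw [min_self])
    have hright : HasDerivWithinAt (fun v => cos (min v π)) (-sin π) (Ici π) π := by
      rw [sin_pi, neg_zero]
      exact (hasDerivWithinAt_const π _ (cos π)).congr (fun v hv => by rw [min_eq_right hv])
        (by rw [min_self])
    rw [min_self, ← hasDerivWithinAt_univ, ← Iic_union_Ici]
    exact hleft.union hright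
  · have hconst : (fun v => cos (min v π)) =ᶠ[nhds u] fun _ => cos π := by
      filter_upwards [Ioi_mem_nhds h] with v hv
      rw [min_eq_right (le_of_lt hv)]
    rw [min_eq_right h.le, sin_pi, neg_zero]
    exact (hasDerivAt_const u (cos π)).congr_of_eventuallyEq hconst

theorem coshalf_sq_eq (r : ℝ) : coshalf r ^ 2 = (1 + cos (min (2 * r) π)) / 2 := by
  rw [coshalf, cos_sq, mul_min_of_nonneg _ _ zero_le_two, mul_div_cancel₀ _ two_ne_zero]
  ring

theorem hasDerivAt_coshalf_sq (r : ℝ) :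
    HasDerivAt (fun r => coshalf r ^ 2) (-sin (min (2 * r) π)) r := by
  have h := (((hasDerivAt_cos_min_pi (2 * r)).comp r
    ((hasDerivAt_id r).const_mul 2)).const_add 1).div_const 2
  rw [show (fun r => coshalf r ^ 2) = fun r => (1 + cos (min (2 * r) π)) / 2 from
    funext coshalf_sq_eq]
  exact h.congr_deriv (by ring)

theorem lipschitzWith_coshalf_sq : LipschitzWith 1 fun r => coshalf r ^ 2 :=
  lipschitzWith_of_nnnorm_deriv_le (fun r => (hasDerivAt_coshalf_sq r).differentiableAt)
    fun r => by
      rw [(hasDerivAt_coshalf_sq r).deriv, ← NNReal.coe_le_coe, coe_nnnorm, norm_neg]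
      exact abs_sin_le_one _

theorem hasDerivAt_coshalf_sq_add_sq (r : ℝ) :
    HasDerivAt (fun r => coshalf r ^ 2 + r ^ 2) (2 * r - sin (min (2 * r) π)) r :=
  ((hasDerivAt_coshalf_sq r).add (hasDerivAt_pow 2 r)).congr_deriv <| by
    simp only [Nat.cast_ofNat, Nat.add_one_sub_one, pow_one]
    ring

theorem convexOn_coshalf_sq_add_sq : ConvexOn ℝ univ fun r => coshalf r ^ 2 + r ^ 2 := by
  refine Monotone.convexOn_univ_of_deriv
    (fun r => (hasDerivAt_coshalf_sq_add_sq r).differentiableAt) ?_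
  intro r s hrs
  simp only [(hasDerivAt_coshalf_sq_add_sq _).deriv]
  have hsin := (abs_sin_sub_sin_le (min (2 * s) π) (min (2 * r) π)).trans
    (abs_min_sub_min_le_max _ _ _ _)
  rw [sub_self, abs_zero, max_eq_left (abs_nonneg _),
    abs_of_nonneg (by linarith : 0 ≤ 2 * s - 2 * r)] at hsin
  linarith [le_abs_self (sin (min (2 * s) π) - sin (min (2 * r) π))]

theorem monotoneOn_coshalf_sq_add_sq : MonotoneOn (fun r => coshalf r ^ 2 + r ^ 2) (Ici 0) := by
  refine monotoneOn_of_hasDerivWithinAt_nonneg (convex_Ici 0)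
    (fun r _ => (hasDerivAt_coshalf_sq_add_sq r).continuousAt.continuousWithinAt)
    (fun r _ => (hasDerivAt_coshalf_sq_add_sq r).hasDerivWithinAt) fun r hr => ?_
  rw [interior_Ici, mem_Ioi] at hr
  have hmin : 0 ≤ min (2 * r) π := le_min (by linarith) pi_pos.le
  linarith [sin_le hmin, min_le_left (2 * r) π]

section InnerProductSpace

variable {E : Type*} [NormedAddCommGroup E] [InnerProductSpace ℝ E]

theorem convexOn_coshalf_sq_add_sq_norm_sub (z : E) :
    ConvexOn ℝ univ fun x => coshalf ‖x - z‖ ^ 2 + ‖x - z‖ ^ 2 := by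
  have hdist : ConvexOn ℝ univ fun x : E => ‖x - z‖ := by
    simpa only [dist_eq_norm] using convexOn_dist z convex_univ
  refine ⟨convex_univ, fun x _ y _ p q hp hq hpq => ?_⟩
  have hcomb : 0 ≤ p • ‖x - z‖ + q • ‖y - z‖ := by
    simp only [smul_eq_mul]
    positivity
  exact (monotoneOn_coshalf_sq_add_sq (norm_nonneg _) hcomb
    (hdist.2 trivial trivial hp hq hpq)).trans
    (convexOn_coshalf_sq_add_sq.2 trivial trivial hp hq hpq)

theorem convexOn_coshalf_sq_norm_sub_add (z : E) {μ κ : ℝ} (hμ : 0 ≤ μ) (hμκ : μ ≤ κ) :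
    ConvexOn ℝ univ fun x => μ * coshalf ‖x - z‖ ^ 2 + κ * ‖x‖ ^ 2 := by
  -- with `c = coshalf ‖x - z‖`: `μc² + κ‖x‖² = μ(c² + ‖x - z‖²) + (κ - μ)‖x‖² + μ(2⟪z, x⟫ - ‖z‖²)`
  have hsq : ConvexOn ℝ univ fun x : E => ‖x‖ ^ 2 :=
    convexOn_univ_norm.pow (fun x _ => norm_nonneg x) 2
  have haff := (((innerₗ E z).convexOn convex_univ).smul zero_le_two).add_const (-‖z‖ ^ 2)
  refine (((convexOn_coshalf_sq_add_sq_norm_sub z).smul hμ).add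
    ((hsq.smul (sub_nonneg.2 hμκ)).add (haff.smul hμ))).congr fun x _ => ?_
  simp only [Pi.add_apply, smul_eq_mul, innerₗ_apply_apply]
  rw [norm_sub_sq_real, real_inner_comm]
  ring

end InnerProductSpace

theorem lipschitzWith_ciInf {α ι : Type*} [PseudoMetricSpace α] [Nonempty ι] {K : ℝ≥0}
    {f : ι → α → ℝ} (hf : ∀ i, LipschitzWith K (f i))
    (hb : ∀ x, BddBelow (range fun i => f i x)) : LipschitzWith K fun x => ⨅ i, f i x :=
  LipschitzWith.of_le_add_mul K fun x y => by
    have : (⨅ i, f i x) - K * dist x y ≤ ⨅ i, f i y := le_ciInf fun i => by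
      linarith [ciInf_le (hb x) i, (hf i).le_add_mul x y]
    linarith

theorem concaveOn_ciInf_sub {E ι : Type*} [AddCommMonoid E] [Module ℝ E] [Nonempty ι]
    {s : Set E} {f : ι → E → ℝ} {g : E → ℝ} (hf : ∀ i, ConcaveOn ℝ s fun x => f i x - g x)
    (hb : ∀ x ∈ s, BddBelow (range fun i => f i x)) :
    ConcaveOn ℝ s fun x => (⨅ i, f i x) - g x := by
  refine ⟨(hf (Classical.arbitrary ι)).1, fun x hx y hy p q hp hq hpq => ?_⟩
  have hle : ∀ i, p • ((⨅ i, f i x) - g x) + q • ((⨅ i, f i y) - g y) + g (p • x + q • y) ≤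
      f i (p • x + q • y) := fun i => by
    have hconc := (hf i).2 hx hy hp hq hpq
    have hfx := mul_le_mul_of_nonneg_left (ciInf_le (hb x hx) i) hp
    have hfy := mul_le_mul_of_nonneg_left (ciInf_le (hb y hy) i) hq
    simp only [smul_eq_mul] at hconc ⊢
    linarith
  linarith [le_ciInf hle]

section SeminormedAddCommGroup

variable {E : Type*} [SeminormedAddCommGroup E]

def hopfLaxInf (C : ℝ) (μ : E → ℝ) (x : E) : ℝ := ⨅ y, (C - μ y * coshalf ‖x - y‖ ^ 2)

variable (C : ℝ) {μ : E → ℝ} {κ : ℝ≥0}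

theorem bddBelow_range_sub_mul_coshalf_sq (hμκ : ∀ y, μ y ≤ κ) (x : E) :
    BddBelow (range fun y => C - μ y * coshalf ‖x - y‖ ^ 2) := by
  refine ⟨C - κ, ?_⟩
  rintro _ ⟨y, rfl⟩
  have hcos : coshalf ‖x - y‖ ^ 2 ≤ 1 := cos_sq_le_one _
  nlinarith [hμκ y, κ.2, sq_nonneg (coshalf ‖x - y‖)]

theorem lipschitzWith_hopfLaxInf (hμ : ∀ y, 0 ≤ μ y) (hμκ : ∀ y, μ y ≤ κ) :
    LipschitzWith κ (hopfLaxInf C μ) := by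
  refine lipschitzWith_ciInf (fun y => LipschitzWith.of_dist_le_mul fun x x' => ?_)
    (bddBelow_range_sub_mul_coshalf_sq C hμκ)
  have hcos : dist (coshalf ‖x - y‖ ^ 2) (coshalf ‖x' - y‖ ^ 2) ≤ dist x x' := by
    simpa only [Function.comp_apply, dist_eq_norm, NNReal.coe_one, one_mul] using
      (lipschitzWith_coshalf_sq.comp (LipschitzWith.dist_left y)).dist_le_mul x x'
  rw [Real.dist_eq, sub_sub_sub_cancel_left, ← mul_sub, abs_mul, abs_of_nonneg (hμ y),
    abs_sub_comm, ← Real.dist_eq]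
  exact mul_le_mul (hμκ y) hcos dist_nonneg κ.2

end SeminormedAddCommGroup

theorem concaveOn_hopfLaxInf_sub {E : Type*} [NormedAddCommGroup E] [InnerProductSpace ℝ E]
    (C : ℝ) {μ : E → ℝ} {κ : ℝ≥0} (hμ : ∀ y, 0 ≤ μ y) (hμκ : ∀ y, μ y ≤ κ) :
    ConcaveOn ℝ univ fun x => hopfLaxInf C μ x - κ * ‖x‖ ^ 2 := by
  refine concaveOn_ciInf_sub (fun y => ?_) fun x _ => bddBelow_range_sub_mul_coshalf_sq C hμκ x
  refine ((convexOn_coshalf_sq_norm_sub_add y (hμ y) (hμκ y)).neg.add_const C).congr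
    fun x _ => ?_
  simp only [Pi.add_apply, Pi.neg_apply]
  ring

theorem one_add_two_mul_mul_pos {a t : ℝ} (ha : -1 / 2 ≤ a) (ht : 0 ≤ t) (ht1 : t < 1) :
    0 < 1 + 2 * a * t := by
  nlinarith

theorem lam_pos {a t : ℝ} (ha : -1 / 2 ≤ a) (ht : 0 < t) (ht1 : t < 1) : 0 < Lam a t := by
  have := one_add_two_mul_mul_pos ha ht.le ht1
  unfold Lam
  positivity

theorem lam_le_one_div_mul_one_sub {a t : ℝ} (ha : -1 / 2 ≤ a) (ht : 0 < t) (ht1 : t < 1) :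
    Lam a t ≤ 1 / (t * (1 - t)) := by
  unfold Lam
  gcongr
  nlinarith

theorem le_toReal_of_coe_le {a : ℝ} {x : EReal} (h : (a : EReal) ≤ x) (hx : x ≠ ⊤) :
    a ≤ x.toReal := by
  simpa using EReal.toReal_le_toReal h (EReal.coe_ne_bot a) hx

section HopfLax

variable {α : Type*} {t a : ℝ} {ξ : α → EReal}

def hopfLaxCoeff (t : ℝ) (ξ : α → EReal) (y : α) : ℝ :=
  if ξ y = ⊤ then 0 else 1 / (2 * t * (1 + 2 * t * (ξ y).toReal))

theorem hopfLaxCoeff_nonneg (ha : -1 / 2 ≤ a) (ht : 0 < t) (ht1 : t < 1)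
    (hξ : ∀ y, (a : EReal) ≤ ξ y) (y : α) : 0 ≤ hopfLaxCoeff t ξ y := by
  unfold hopfLaxCoeff
  split_ifs with hy
  · exact le_rfl
  · have := one_add_two_mul_mul_pos ha ht.le ht1
    have hay := le_toReal_of_coe_le (hξ y) hy
    have : 0 < 1 + 2 * t * (ξ y).toReal := by nlinarith
    positivity

theorem hopfLaxCoeff_le_half_lam (ha : -1 / 2 ≤ a) (ht : 0 < t) (ht1 : t < 1)
    (hξ : ∀ y, (a : EReal) ≤ ξ y) (y : α) : hopfLaxCoeff t ξ y ≤ Lam a t / 2 := by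
  unfold hopfLaxCoeff
  split_ifs with hy
  · exact (half_pos (lam_pos ha ht ht1)).le
  · have := one_add_two_mul_mul_pos ha ht.le ht1
    have hay := le_toReal_of_coe_le (hξ y) hy
    calc 1 / (2 * t * (1 + 2 * t * (ξ y).toReal)) ≤ 1 / (2 * t * (1 + 2 * a * t)) :=
          one_div_le_one_div_of_le (by positivity)
            (by nlinarith [mul_nonneg (mul_nonneg ht.le ht.le) (sub_nonneg.2 hay)])
      _ = Lam a t / 2 := by
          unfold Lam
          field_simp

end HopfLax

section EuclideanSpace

variable {d : ℕ} {t a : ℝ} {ξ : EuclideanSpace ℝ (Fin d) → EReal}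

theorem hlIntegrand_eq_coe (ha : -1 / 2 ≤ a) (ht : 0 < t) (ht1 : t < 1)
    (hξ : ∀ y, (a : EReal) ≤ ξ y) (x y : EuclideanSpace ℝ (Fin d)) :
    hlIntegrand t ξ x y =
      ((1 / (2 * t) - hopfLaxCoeff t ξ y * coshalf ‖x - y‖ ^ 2 : ℝ) : EReal) := by
  unfold hlIntegrand hopfLaxCoeff
  have hy := hξ y
  generalize ξ y = e at hy ⊢
  induction e using EReal.rec with
  | bot => exact absurd (le_bot_iff.1 hy) (EReal.coe_ne_bot a)
  | top =>
    rw [EReal.coe_mul_top_of_pos (by positivity), EReal.add_top_of_ne_bot (x := 1) (by decide)]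
    simp [qdiv]
  | coe r =>
    have hr : a ≤ r := EReal.coe_le_coe_iff.1 hy
    have hD : 0 < 1 + 2 * t * r := by nlinarith
    rw [show (1 : EReal) + ((2 * t : ℝ) : EReal) * (r : EReal) = ((1 + 2 * t * r : ℝ) : EReal) by
      norm_cast]
    simp only [qdiv, EReal.coe_ne_top, if_false, EReal.coe_eq_zero, hD.ne', EReal.toReal_coe]
    norm_cast
    field_simp

theorem hopfLax_eq_coe_hopfLaxInf (ha : -1 / 2 ≤ a) (ht : 0 < t) (ht1 : t < 1)
    (hξ : ∀ y, (a : EReal) ≤ ξ y) (x : EuclideanSpace ℝ (Fin d)) :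
    hopfLax t ξ x = (hopfLaxInf (1 / (2 * t)) (hopfLaxCoeff t ξ) x : EReal) := by
  have hb := bddBelow_range_sub_mul_coshalf_sq (1 / (2 * t)) (κ := (Lam a t / 2).toNNReal)
    (fun y => (hopfLaxCoeff_le_half_lam ha ht ht1 hξ y).trans (Real.le_coe_toNNReal _)) x
  rw [hopfLax, if_neg ht.ne', iInf_congr (hlIntegrand_eq_coe ha ht ht1 hξ x), hopfLaxInf]
  exact (Monotone.map_ciInf_of_continuousAt continuous_coe_real_ereal.continuousAt
    EReal.coe_strictMono.monotone hb).symm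

end EuclideanSpace

theorem statement_1_general (d : ℕ) (a : ℝ) (b : EReal)
    (ha : -1 / 2 ≤ a)
    (ξ₀ : EuclideanSpace ℝ (Fin d) → EReal)
    (hrange : ∀ x, (a : EReal) ≤ ξ₀ x ∧ ξ₀ x ≤ b) :
    ∀ t : ℝ, 0 < t → t < 1 →
      (∃ f : EuclideanSpace ℝ (Fin d) → ℝ,
        (∀ x, hopfLax t ξ₀ x = ((f x : ℝ) : EReal)) ∧
        (∀ x y, |f x - f y| ≤ Lam a t * ‖x - y‖) ∧
        ConcaveOn ℝ Set.univ (fun x => f x - Lam a t / 2 * ‖x‖ ^ 2)) ∧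
      Lam a t ≤ 1 / (t * (1 - t)) := by
  intro t ht ht1
  have hξ : ∀ y, (a : EReal) ≤ ξ₀ y := fun y => (hrange y).1
  have hΛ := lam_pos ha ht ht1
  set κ := (Lam a t / 2).toNNReal
  have hκ : (κ : ℝ) = Lam a t / 2 := Real.coe_toNNReal _ (by positivity)
  have hμ := hopfLaxCoeff_nonneg ha ht ht1 hξ
  have hμκ : ∀ y, hopfLaxCoeff t ξ₀ y ≤ κ := fun y =>
    hκ ▸ hopfLaxCoeff_le_half_lam ha ht ht1 hξ y
  refine ⟨⟨hopfLaxInf (1 / (2 * t)) (hopfLaxCoeff t ξ₀),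
    hopfLax_eq_coe_hopfLaxInf ha ht ht1 hξ, fun x y => ?_, ?_⟩,
    lam_le_one_div_mul_one_sub ha ht ht1⟩
  · calc |_ - _| ≤ κ * ‖x - y‖ := by
          simpa only [dist_eq_norm, Real.norm_eq_abs] using
            (lipschitzWith_hopfLaxInf _ hμ hμκ).dist_le_mul x y
      _ ≤ Lam a t * ‖x - y‖ := by rw [hκ]; gcongr; linarith
  · simpa only [hκ] using concaveOn_hopfLaxInf_sub (1 / (2 * t)) hμ hμκ

theorem statement_1 (d : ℕ) (hd : 1 ≤ d) (a : ℝ) (b : EReal)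
    (ha : -1 / 2 ≤ a) (hab : (a : EReal) ≤ b)
    (ξ₀ : EuclideanSpace ℝ (Fin d) → EReal)
    (hrange : ∀ x, (a : EReal) ≤ ξ₀ x ∧ ξ₀ x ≤ b)
    (hlsc : LowerSemicontinuous ξ₀) :
    ∀ t : ℝ, 0 < t → t < 1 →
      (∃ f : EuclideanSpace ℝ (Fin d) → ℝ,
        (∀ x, hopfLax t ξ₀ x = ((f x : ℝ) : EReal)) ∧
        (∀ x y, |f x - f y| ≤ Lam a t * ‖x - y‖) ∧
        ConcaveOn ℝ Set.univ (fun x => f x - Lam a t / 2 * ‖x‖ ^ 2)) ∧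
      Lam a t ≤ 1 / (t * (1 - t)) :=
  statement_1_general d a b ha ξ₀ hrange
end
end

section
/- Let f : ℝ^d → ℝ be convex, let Ξ ⊆ ℝ^d be a Borel set containing 0 such that 0 is a Lebesgue density point of Ξ, and assume f is differentiable at every point of Ξ. Let p := ∇f(0), and suppose there exist a matrix A ∈ ℝ^{d×d} and a constant C ≥ 0 such that |∇f(y) − p − A y| = o(|y|) as y → 0 with y ∈ Ξ, and f(y) − f(0) − ⟨p, y⟩ ≤ C |y|² for all y ∈ Ξ. Then: (i) A is symmetric; (ii) sup{ |z − p − A y| : z ∈ ∂f(y) } = o(|y|) as y → 0 in ℝ^d, where ∂f denotes the subdifferential of the convex function f; (iii) f(y) − f(0) − ⟨p, y⟩ − (1/2)⟨A y, y⟩ = o(|y|²) as y → 0 in ℝ^d. -/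
/-!
Subgradients of a convex function are monotone: `⟪z - z', y - x⟫ ≥ 0` for `z ∈ ∂f y`,
`z' ∈ ∂f x`. Given `z ∈ ∂f y`, put `w = z - p - A y` and probe in the direction of `w`: since `0`
is a density point of `Ξ`, the ball of radius `η ‖y‖ / 2` around `y + η ‖y‖ • w / ‖w‖` meets `Ξ`
at some `x`, where `∇f x = p + A x + o(‖y‖)`, and monotonicity forces
`‖w‖ ≤ (9/2 ‖A‖ η + o(1)) ‖y‖`. This is (ii).

Summing the subgradient inequalities along a finely subdivided segment from `b` to `b + y` turns
(ii) into the two-point expansion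
`f (b + y) - f b = ⟪p + A b, y⟫ + ½ ⟪A y, y⟫ + o((‖b‖ + ‖y‖)²)`.
Taking `b = 0` gives (iii); going around the parallelogram `0, s u, s u + s v, s v` in the two
directions leaves `s² (⟪A v, u⟫ - ⟪A u, v⟫) = o(s²)`, which is (i). Subgradients exist at every
point by Hahn–Banach, applied to the sublinear one-sided directional derivative.
-/

noncomputable section

open scoped RealInnerProductSpace
open Set Filter Topology

section Subgradients

variable {E : Type*} [NormedAddCommGroup E] [InnerProductSpace ℝ E] {f : E → ℝ}

def subdifferential (f : E → ℝ) (x : E) : Set E :=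
  {z | ∀ w, f x + ⟪z, w - x⟫ ≤ f w}

lemma inner_sub_nonneg_of_mem_subdifferential {x x' z z' : E} (hz : z ∈ subdifferential f x)
    (hz' : z' ∈ subdifferential f x') : 0 ≤ ⟪z - z', x - x'⟫ := by
  have h₁ := hz x'
  have h₂ := hz' x
  rw [← neg_sub x x', inner_neg_right] at h₁
  rw [inner_sub_left]
  linarith

lemma ConvexOn.comp_line (hf : ConvexOn ℝ univ f) (x v : E) :
    ConvexOn ℝ univ (fun t : ℝ => f (x + t • v)) := by
  simpa [Function.comp_def] using
    (hf.translate_right x).comp_linearMap (LinearMap.toSpanSingleton ℝ E v)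

section Gradient

variable [CompleteSpace E] {g x : E}

lemma HasGradientAt.eq_of_mem_subdifferential (h : HasGradientAt f g x) {z : E}
    (hz : z ∈ subdifferential f x) : z = g := by
  have hmin : IsLocalMin (fun w => f w - ⟪z, w⟫) x :=
    IsMinOn.isLocalMin (s := univ) (fun w _ => by
      have := hz w
      rw [inner_sub_right] at this
      simp only [mem_ofPred_eq]
      linarith) univ_mem
  have hderiv := h.hasFDerivAt.sub ((InnerProductSpace.toDual ℝ E z).hasFDerivAt)
  have := hmin.hasFDerivAt_eq_zero hderiv
  rw [sub_eq_zero] at this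
  exact ((InnerProductSpace.toDual ℝ E).injective this).symm

lemma HasGradientAt.mem_subdifferential (hf : ConvexOn ℝ univ f) (h : HasGradientAt f g x) :
    g ∈ subdifferential f x := by
  intro w
  have hderiv : HasDerivAt (fun t : ℝ => f (x + t • (w - x))) ⟪g, w - x⟫ 0 := by
    have hx : HasFDerivAt f (InnerProductSpace.toDual ℝ E g) (x + (0 : ℝ) • (w - x)) := by
      simpa using h.hasFDerivAt
    simpa [Function.comp_def] using hx.comp_hasDerivAt (0 : ℝ)
      (((hasDerivAt_id (0 : ℝ)).smul_const (w - x)).const_add x)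
  have := (hf.comp_line x (w - x)).le_slope_of_hasDerivAt (mem_univ 0) (mem_univ 1) one_pos hderiv
  simp only [slope_def_field, one_smul, add_sub_cancel, zero_smul, add_zero, sub_zero,
    div_one] at this
  linarith

end Gradient

def rightDirDeriv (f : E → ℝ) (x v : E) : ℝ :=
  derivWithin (fun t : ℝ => f (x + t • v)) (Ioi 0) 0

lemma rightDirDeriv_zero (f : E → ℝ) (x : E) : rightDirDeriv f x 0 = 0 := by
  simp [rightDirDeriv]

namespace ConvexOn

variable (hf : ConvexOn ℝ univ f) (x : E)
include hf

lemma hasDerivWithinAt_rightDirDeriv (v : E) :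
    HasDerivWithinAt (fun t : ℝ => f (x + t • v)) (rightDirDeriv f x v) (Ioi 0) 0 :=
  (hf.comp_line x v).hasDerivWithinAt_rightDeriv_of_mem_interior (by simp)

lemma tendsto_slope_rightDirDeriv (v : E) :
    Tendsto (fun t => (f (x + t • v) - f x) / t) (𝓝[>] 0) (𝓝 (rightDirDeriv f x v)) := by
  have := (hasDerivWithinAt_iff_tendsto_slope' (by simp)).mp
    (hf.hasDerivWithinAt_rightDirDeriv x v)
  simpa only [slope_fun_def_field, sub_zero, zero_smul, add_zero] using this

lemma rightDirDeriv_le_slope (v : E) {t : ℝ} (ht : 0 < t) :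
    rightDirDeriv f x v ≤ (f (x + t • v) - f x) / t := by
  have := (hf.comp_line x v).rightDeriv_le_slope_of_mem_interior (by simp) (mem_univ t) ht
  simp only [slope_def_field, sub_zero, zero_smul, add_zero] at this
  exact this

lemma rightDirDeriv_le_sub (v : E) : rightDirDeriv f x v ≤ f (x + v) - f x := by
  simpa using hf.rightDirDeriv_le_slope x v one_pos

lemma rightDirDeriv_smul (v : E) {c : ℝ} (hc : 0 < c) :
    rightDirDeriv f x (c • v) = c * rightDirDeriv f x v := by
  have hscale : HasDerivWithinAt (fun t : ℝ => c * t) c (Ioi 0) 0 := by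
    simpa using (hasDerivWithinAt_id (0 : ℝ) (Ioi 0)).const_mul c
  have hv := hf.hasDerivWithinAt_rightDirDeriv x v
  rw [← mul_zero c] at hv
  have hcomp := hv.comp (0 : ℝ) hscale (fun t ht => by simpa using mul_pos hc ht)
  have hline : (fun t : ℝ => f (x + t • (c • v))) = (fun t => f (x + (c * t) • v)) := by
    ext t
    rw [smul_smul, mul_comm]
  rw [mul_comm, rightDirDeriv, hline]
  exact hcomp.derivWithin (uniqueDiffWithinAt_Ioi 0)

lemma rightDirDeriv_add_le (u v : E) :
    rightDirDeriv f x (u + v) ≤ rightDirDeriv f x u + rightDirDeriv f x v := by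
  have hmid : ∀ᶠ t in 𝓝[>] (0 : ℝ), (f (x + t • (u + v)) - f x) / t
      ≤ ((f (x + t • ((2 : ℝ) • u)) - f x) / t + (f (x + t • ((2 : ℝ) • v)) - f x) / t) / 2 := by
    filter_upwards [self_mem_nhdsWithin] with t (ht : 0 < t)
    have hconv := hf.2 (mem_univ (x + t • ((2 : ℝ) • u))) (mem_univ (x + t • ((2 : ℝ) • v)))
      (by norm_num : (0 : ℝ) ≤ 1 / 2) (by norm_num : (0 : ℝ) ≤ 1 / 2) (by norm_num)
    have hpt : (1 / 2 : ℝ) • (x + t • ((2 : ℝ) • u)) + (1 / 2 : ℝ) • (x + t • ((2 : ℝ) • v))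
        = x + t • (u + v) := by module
    rw [hpt, smul_eq_mul, smul_eq_mul] at hconv
    rw [← add_div, div_div, div_le_div_iff₀ ht (by positivity)]
    nlinarith
  have := le_of_tendsto_of_tendsto (hf.tendsto_slope_rightDirDeriv x (u + v))
    (((hf.tendsto_slope_rightDirDeriv x _).add (hf.tendsto_slope_rightDirDeriv x _)).div_const 2)
    hmid
  rwa [hf.rightDirDeriv_smul x u two_pos, hf.rightDirDeriv_smul x v two_pos, ← mul_add,
    mul_div_cancel_left₀ _ two_ne_zero] at this

lemma nonempty_subdifferential [FiniteDimensional ℝ E] : (subdifferential f x).Nonempty := by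
  obtain ⟨g, -, hg⟩ := exists_extension_of_le_sublinear ((0 : E →ₗ[ℝ] ℝ).toPMap ⊥)
    (rightDirDeriv f x) (fun c hc v => hf.rightDirDeriv_smul x v hc) (hf.rightDirDeriv_add_le x)
    (by
      rintro ⟨v, hv⟩
      obtain rfl := (Submodule.mem_bot ℝ).mp hv
      simp [rightDirDeriv_zero])
  refine ⟨(InnerProductSpace.toDual ℝ E).symm (LinearMap.toContinuousLinearMap g), fun w => ?_⟩
  rw [InnerProductSpace.toDual_symm_apply]
  have := (hg (w - x)).trans (hf.rightDirDeriv_le_sub x (w - x))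
  simp only [LinearMap.coe_toContinuousLinearMap', add_sub_cancel] at this ⊢
  linarith

end ConvexOn

section FiniteDimensional

variable [FiniteDimensional ℝ E]

lemma ConvexOn.abs_sub_quadratic_le_of_subdifferential (hf : ConvexOn ℝ univ f) (b y P : E)
    (A : E →L[ℝ] E) {η : ℝ}
    (h : ∀ t ∈ Icc (0 : ℝ) 1, ∀ z ∈ subdifferential f (b + t • y),
      |⟪z - P - A (b + t • y), y⟫| ≤ η) :
    |f (b + y) - f b - ⟪P, y⟫ - ⟪A b, y⟫ - 1 / 2 * ⟪A y, y⟫| ≤ η := by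
  set c := ⟪P, y⟫ + ⟪A b, y⟫
  set a := ⟪A y, y⟫
  set H : ℝ → ℝ := fun t => f (b + t • y) - t * c - t ^ 2 / 2 * a with hH
  have hinner (t : ℝ) (z : E) : ⟪z - P - A (b + t • y), y⟫ = ⟪z, y⟫ - c - t * a := by
    simp only [c, a, inner_sub_left, map_add, map_smul, inner_add_left, real_inner_smul_left]
    ring
  have hstep : ∀ s t, 0 ≤ s → s ≤ t → t ≤ 1 →
      |H t - H s| ≤ (t - s) * (η + |a| * (t - s) / 2) := by
    intro s t hs hst ht
    obtain ⟨zs, hzs⟩ := hf.nonempty_subdifferential (b + s • y)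
    obtain ⟨zt, hzt⟩ := hf.nonempty_subdifferential (b + t • y)
    have hs' := abs_le.mp ((hinner s zs) ▸ h s ⟨hs, hst.trans ht⟩ zs hzs)
    have ht' := abs_le.mp ((hinner t zt) ▸ h t ⟨hs.trans hst, ht⟩ zt hzt)
    have hlow := hzs (b + t • y)
    have hupp := hzt (b + s • y)
    rw [show b + t • y - (b + s • y) = (t - s) • y by module, real_inner_smul_right] at hlow
    rw [show b + s • y - (b + t • y) = -((t - s) • y) by module, inner_neg_right,
      real_inner_smul_right] at hupp
    have hΔ : 0 ≤ t - s := sub_nonneg.mpr hst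
    simp only [hH]
    rw [abs_le]
    have hsq : 0 ≤ (t - s) * (t - s) * (|a| - a) :=
      mul_nonneg (mul_nonneg hΔ hΔ) (sub_nonneg.mpr (le_abs_self a))
    constructor
    · nlinarith [mul_le_mul_of_nonneg_left hs'.1 hΔ]
    · nlinarith [mul_le_mul_of_nonneg_left ht'.2 hΔ]
  have hpartition : ∀ N : ℕ, 0 < N → |H 1 - H 0| ≤ η + |a| / 2 / N := by
    intro N hN
    have hN' : (0 : ℝ) < N := Nat.cast_pos.mpr hN
    calc |H 1 - H 0| = dist (H ((0 : ℕ) / N)) (H ((N : ℕ) / N)) := by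
          rw [Real.dist_eq, abs_sub_comm, Nat.cast_zero, zero_div, div_self hN'.ne']
      _ ≤ ∑ k ∈ Finset.range N, dist (H (k / N)) (H ((k + 1 : ℕ) / N)) :=
          dist_le_range_sum_dist (fun k : ℕ => H (k / N)) N
      _ ≤ ∑ k ∈ Finset.range N, (1 / N) * (η + |a| * (1 / N) / 2) := by
          refine Finset.sum_le_sum fun k hk => ?_
          have hk : (k : ℝ) + 1 ≤ N := by exact_mod_cast Finset.mem_range.mp hk
          have hwidth : ((k + 1 : ℕ) : ℝ) / N - k / N = 1 / N := by push_cast; ring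
          rw [Real.dist_eq, abs_sub_comm, ← hwidth]
          exact hstep (k / N) ((k + 1 : ℕ) / N) (by positivity) (by gcongr; simp)
            ((div_le_one hN').mpr (by exact_mod_cast hk))
      _ = η + |a| / 2 / N := by
          rw [Finset.sum_const, Finset.card_range, nsmul_eq_mul]
          field_simp
  have hlim : Tendsto (fun N : ℕ => η + |a| / 2 / N) atTop (𝓝 η) := by
    simpa using tendsto_const_nhds.add (tendsto_const_div_atTop_nhds_zero_nat (|a| / 2))
  have hH10 : H 1 - H 0 = f (b + y) - f b - ⟪P, y⟫ - ⟪A b, y⟫ - 1 / 2 * ⟪A y, y⟫ := by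
    simp only [hH, c, a, one_smul, zero_smul, add_zero]
    ring
  rw [← hH10]
  exact ge_of_tendsto hlim ((eventually_gt_atTop 0).mono hpartition)

lemma ConvexOn.expansion_of_subdifferential (hf : ConvexOn ℝ univ f)
    {p : E} {A : E →L[ℝ] E}
    (hsub : ∀ ε > (0 : ℝ), ∃ δ > (0 : ℝ), ∀ y : E, ‖y‖ < δ →
      ∀ z ∈ subdifferential f y, ‖z - p - A y‖ ≤ ε * ‖y‖) :
    ∀ ε > (0 : ℝ), ∃ δ > (0 : ℝ), ∀ b y : E, ‖b‖ + ‖y‖ < δ →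
      |f (b + y) - f b - ⟪p, y⟫ - ⟪A b, y⟫ - 1 / 2 * ⟪A y, y⟫| ≤ ε * (‖b‖ + ‖y‖) ^ 2 := by
  intro ε hε
  obtain ⟨δ, hδ, hz⟩ := hsub ε hε
  refine ⟨δ, hδ, fun b y hby =>
    hf.abs_sub_quadratic_le_of_subdifferential b y p A fun t ht z hzt => ?_⟩
  have hx : ‖b + t • y‖ ≤ ‖b‖ + ‖y‖ := by
    refine (norm_add_le _ _).trans (add_le_add_right ?_ _)
    rw [norm_smul, Real.norm_of_nonneg ht.1]
    exact mul_le_of_le_one_left (norm_nonneg y) ht.2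
  calc |⟪z - p - A (b + t • y), y⟫| ≤ ‖z - p - A (b + t • y)‖ * ‖y‖ :=
        abs_real_inner_le_norm _ _
    _ ≤ (ε * (‖b‖ + ‖y‖)) * (‖b‖ + ‖y‖) :=
        mul_le_mul ((hz _ (hx.trans_lt hby) z hzt).trans (by gcongr))
          (le_add_of_nonneg_left (norm_nonneg b)) (norm_nonneg y) (by positivity)
    _ = ε * (‖b‖ + ‖y‖) ^ 2 := by ring

end FiniteDimensional

lemma isSymmetric_of_expansion {F : E → ℝ} {p : E} {A : E →L[ℝ] E}
    (hexp : ∀ ε > (0 : ℝ), ∃ δ > (0 : ℝ), ∀ b y : E, ‖b‖ + ‖y‖ < δ →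
      |F (b + y) - F b - ⟪p, y⟫ - ⟪A b, y⟫ - 1 / 2 * ⟪A y, y⟫| ≤ ε * (‖b‖ + ‖y‖) ^ 2) :
    (A : E →ₗ[ℝ] E).IsSymmetric := by
  intro u v
  set M := (‖u‖ + ‖v‖) ^ 2
  suffices hsmall : ∀ ε > (0 : ℝ), |⟪A v, u⟫ - ⟪A u, v⟫| ≤ 4 * M * ε by
    have hlim : Tendsto (fun ε : ℝ => 4 * M * ε) (𝓝[>] 0) (𝓝 0) := by
      simpa using (tendsto_nhdsWithin_of_tendsto_nhds (tendsto_id (x := 𝓝 (0 : ℝ)))).const_mul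
        (4 * M)
    have := ge_of_tendsto hlim (eventually_nhdsWithin_of_forall hsmall)
    show ⟪A u, v⟫ = ⟪u, A v⟫
    rw [real_inner_comm (A v) u]
    exact (sub_eq_zero.mp (abs_nonpos_iff.mp this)).symm
  intro ε hε
  obtain ⟨δ, hδ, hexpδ⟩ := hexp ε hε
  set e : E → E → ℝ := fun b y => F (b + y) - F b - ⟪p, y⟫ - ⟪A b, y⟫ - 1 / 2 * ⟪A y, y⟫
  set s := δ / (‖u‖ + ‖v‖ + 1)
  have hs : 0 < s := by positivity
  have hsδ : s * (‖u‖ + ‖v‖) < δ := by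
    calc s * (‖u‖ + ‖v‖) < s * (‖u‖ + ‖v‖ + 1) := mul_lt_mul_of_pos_left (by linarith) hs
      _ = δ := div_mul_cancel₀ δ (by positivity)
  have he : ∀ b y : E, ‖b‖ + ‖y‖ ≤ s * (‖u‖ + ‖v‖) → |e b y| ≤ ε * (s ^ 2 * M) := by
    intro b y hby
    refine (hexpδ b y (hby.trans_lt hsδ)).trans ?_
    calc ε * (‖b‖ + ‖y‖) ^ 2 ≤ ε * (s * (‖u‖ + ‖v‖)) ^ 2 := by gcongr
      _ = ε * (s ^ 2 * M) := by ring
  have hnorm (w : E) : ‖s • w‖ = s * ‖w‖ := by rw [norm_smul, Real.norm_of_nonneg hs.le]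
  have h₁ := he 0 (s • u) (by rw [norm_zero, zero_add, hnorm]; gcongr; simp)
  have h₂ := he (s • u) (s • v) (by rw [hnorm, hnorm, mul_add])
  have h₃ := he 0 (s • v) (by rw [norm_zero, zero_add, hnorm]; gcongr; simp)
  have h₄ := he (s • v) (s • u) (by rw [hnorm, hnorm, mul_add, add_comm])
  have hloop : s ^ 2 * (⟪A v, u⟫ - ⟪A u, v⟫)
      = (e 0 (s • u) + e (s • u) (s • v)) - (e 0 (s • v) + e (s • v) (s • u)) := by
    simp only [e, zero_add, add_comm (s • v) (s • u), map_zero, map_smul, inner_zero_left,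
      real_inner_smul_left, real_inner_smul_right]
    ring
  have hbound : s ^ 2 * |⟪A v, u⟫ - ⟪A u, v⟫| ≤ s ^ 2 * (4 * M * ε) := by
    rw [← abs_of_pos (pow_pos hs 2), ← abs_mul, abs_of_pos (pow_pos hs 2), hloop]
    calc _ ≤ |e 0 (s • u)| + |e (s • u) (s • v)| + (|e 0 (s • v)| + |e (s • v) (s • u)|) :=
          (abs_sub _ _).trans (add_le_add (abs_add_le _ _) (abs_add_le _ _))
      _ ≤ _ := by linarith
  exact le_of_mul_le_mul_left hbound (pow_pos hs 2)

section Density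

open MeasureTheory Measure Metric Module

variable {F : Type*} [NormedAddCommGroup F] [NormedSpace ℝ F] [FiniteDimensional ℝ F]
  [MeasurableSpace F] [BorelSpace F]

def IsDensityPoint (μ : Measure F) (s : Set F) (x : F) : Prop :=
  Tendsto (fun ρ => μ (s ∩ ball x ρ) / μ (ball x ρ)) (𝓝[>] 0) (𝓝 1)

lemma IsDensityPoint.eventually_inter_ball_nonempty {μ : Measure F} [μ.IsAddHaarMeasure]
    {s : Set F} {x : F} (h : IsDensityPoint μ s x) {κ : ℝ} (hκ : 0 < κ) :
    ∀ᶠ r in 𝓝[>] 0, ∀ b, κ * dist b x ≤ r → (s ∩ ball b r).Nonempty := by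
  set l := κ / (1 + κ)
  have hl : 0 < l := by positivity
  set c := ENNReal.ofReal (l ^ finrank ℝ F)
  have hc : c ≠ 0 := (ENNReal.ofReal_pos.mpr (pow_pos hl _)).ne'
  have hdense : ∀ᶠ ρ in 𝓝[>] 0, 1 - c < μ (s ∩ ball x ρ) / μ (ball x ρ) :=
    h.eventually (lt_mem_nhds (ENNReal.sub_lt_self ENNReal.one_ne_top one_ne_zero hc))
  have hscale : Tendsto (fun r : ℝ => r / l) (𝓝[>] 0) (𝓝[>] 0) :=
    tendsto_nhdsWithin_iff.mpr ⟨by simpa using (tendsto_nhdsWithin_of_tendsto_nhds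
      (tendsto_id (x := 𝓝 (0 : ℝ)))).div_const l,
      eventually_nhdsWithin_of_forall fun r (hr : 0 < r) => div_pos hr hl⟩
  filter_upwards [hscale.eventually hdense, self_mem_nhdsWithin] with r hr (hr0 : 0 < r) b hb
  by_contra hempty
  set M := μ (ball x (r / l))
  have hsub : ball b r ⊆ ball x (r / l) := by
    refine ball_subset_ball' ?_
    have : dist b x ≤ r / κ := by rw [le_div_iff₀ hκ, mul_comm]; exact hb
    calc r + dist b x ≤ r + r / κ := by gcongr
      _ = r / l := by simp only [l]; field_simp; ring
  have hball : μ (ball b r) = c * M := by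
    rw [show r = l * (r / l) by field_simp, addHaar_ball_mul_of_pos μ b hl,
      ← addHaar_ball_center μ x]
  have hdisj : Disjoint (s ∩ ball x (r / l)) (ball b r) :=
    Set.disjoint_left.mpr fun y hy hyb => hempty ⟨y, hy.1, hyb⟩
  have hunion : μ (s ∩ ball x (r / l)) + μ (ball b r) ≤ M := by
    rw [← measure_union hdisj measurableSet_ball]
    exact measure_mono (union_subset inter_subset_right hsub)
  have hM : M ≠ ⊤ := measure_ball_lt_top.ne
  have hlt : (1 - c) * M < μ (s ∩ ball x (r / l)) :=
    (ENNReal.lt_div_iff_mul_lt (Or.inl (measure_ball_pos μ x (div_pos hr0 hl)).ne')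
      (Or.inl hM)).mp hr
  have : M < M := calc
    M ≤ (1 - c + c) * M := le_mul_of_one_le_left' le_tsub_add
    _ = (1 - c) * M + c * M := add_mul _ _ _
    _ < μ (s ∩ ball x (r / l)) + μ (ball b r) :=
        ENNReal.add_lt_add_of_lt_of_le (ENNReal.mul_ne_top ENNReal.ofReal_ne_top hM) hlt
          hball.ge
    _ ≤ M := hunion
  exact lt_irrefl M this

end Density

lemma norm_le_of_inner_le_of_norm_sub_smul_le {w d : E} {t a c : ℝ} (ht : 0 < t) (ha : 0 ≤ a)
    (hc : 0 ≤ c) (hd : ‖d - t • ‖w‖⁻¹ • w‖ ≤ t / 2) (h : ⟪w, d⟫ ≤ a * ‖d‖ ^ 2 + c * ‖d‖) :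
    ‖w‖ ≤ 9 / 2 * a * t + 3 * c := by
  rcases eq_or_ne w 0 with rfl | hw
  · rw [norm_zero]
    positivity
  have hstep : ‖t • ‖w‖⁻¹ • w‖ = t := by
    rw [norm_smul, norm_smul, norm_inv, norm_norm, inv_mul_cancel₀ (norm_ne_zero_iff.mpr hw),
      mul_one, Real.norm_of_nonneg ht.le]
  have hdn : ‖d‖ ≤ 3 / 2 * t := by
    calc ‖d‖ ≤ ‖d - t • ‖w‖⁻¹ • w‖ + ‖t • ‖w‖⁻¹ • w‖ := norm_le_norm_sub_add d _
      _ ≤ 3 / 2 * t := by rw [hstep]; linarith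
  have hlow : t * ‖w‖ / 2 ≤ ⟪w, d⟫ := by
    have halong : ⟪w, t • ‖w‖⁻¹ • w⟫ = t * ‖w‖ := by
      rw [real_inner_smul_right, real_inner_smul_right, real_inner_self_eq_norm_sq]
      field_simp
    have hacross := (abs_le.mp (abs_real_inner_le_norm w (d - t • ‖w‖⁻¹ • w))).1
    rw [inner_sub_right, halong] at hacross
    nlinarith [norm_nonneg w]
  have hup : a * ‖d‖ ^ 2 + c * ‖d‖ ≤ a * (3 / 2 * t) ^ 2 + c * (3 / 2 * t) := by
    gcongr
  nlinarith

section FiniteDimensional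

variable [FiniteDimensional ℝ E] [MeasurableSpace E] [BorelSpace E]

theorem ConvexOn.norm_sub_le_of_mem_subdifferential {μ : MeasureTheory.Measure E}
    [μ.IsAddHaarMeasure] (hf : ConvexOn ℝ univ f) {Ξ : Set E} (hΞ : IsDensityPoint μ Ξ 0)
    (hdiff : ∀ x ∈ Ξ, DifferentiableAt ℝ f x) {p : E} (hp : HasGradientAt f p 0)
    {A : E →L[ℝ] E} (hA : ∀ ε > (0 : ℝ), ∃ δ > (0 : ℝ), ∀ y ∈ Ξ, ‖y‖ < δ →
      ‖gradient f y - p - A y‖ ≤ ε * ‖y‖) :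
    ∀ ε > (0 : ℝ), ∃ δ > (0 : ℝ), ∀ y : E, ‖y‖ < δ →
      ∀ z ∈ subdifferential f y, ‖z - p - A y‖ ≤ ε * ‖y‖ := by
  intro ε hε
  set η := min 1 (ε / (9 * ‖A‖ + 1))
  have hη : 0 < η := lt_min one_pos (by positivity)
  have hη1 : η ≤ 1 := min_le_left _ _
  have hηA : 9 * ‖A‖ * η ≤ ε := by
    have := (le_div_iff₀ (by positivity)).mp (min_le_right 1 (ε / (9 * ‖A‖ + 1)))
    nlinarith
  obtain ⟨δ₁, hδ₁, hgrad⟩ := hA (ε / 18) (by positivity)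
  obtain ⟨δ₂, hδ₂, hmeet⟩ := mem_nhdsGT_iff_exists_Ioo_subset.mp
    (hΞ.eventually_inter_ball_nonempty (κ := η / (2 * (1 + η))) (by positivity))
  refine ⟨min (δ₁ / 3) (δ₂ / η), lt_min (by positivity) (div_pos hδ₂ hη), fun y hy z hz => ?_⟩
  rcases eq_or_ne y 0 with rfl | hy0
  · rw [hp.eq_of_mem_subdifferential hz]
    simp
  have hyδ₁ : ‖y‖ < δ₁ / 3 := hy.trans_le (min_le_left _ _)
  have hyδ₂ : η * ‖y‖ < δ₂ := by
    have := hy.trans_le (min_le_right _ _)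
    rwa [lt_div_iff₀ hη, mul_comm] at this
  set w := z - p - A y
  set t := η * ‖y‖
  have ht : 0 < t := mul_pos hη (norm_pos_iff.mpr hy0)
  set b := y + t • ‖w‖⁻¹ • w
  have hb : ‖b‖ ≤ ‖y‖ + t := by
    refine (norm_add_le _ _).trans (add_le_add_right ?_ _)
    rw [norm_smul, norm_smul, norm_inv, norm_norm, Real.norm_of_nonneg ht.le]
    exact mul_le_of_le_one_right ht.le (inv_mul_le_one_of_le₀ le_rfl (norm_nonneg w))
  obtain ⟨x, hxΞ, hxb⟩ := hmeet (show t / 2 ∈ Ioo 0 δ₂ from ⟨by positivity, by linarith⟩) b (by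
    rw [dist_zero_right]
    calc η / (2 * (1 + η)) * ‖b‖ ≤ η / (2 * (1 + η)) * (‖y‖ + t) := by gcongr
      _ = t / 2 := by simp only [t]; field_simp)
  rw [Metric.mem_ball, dist_eq_norm] at hxb
  have hd : ‖(x - y) - t • ‖w‖⁻¹ • w‖ ≤ t / 2 := by
    rw [sub_sub]
    exact hxb.le
  have hx : ‖x‖ ≤ 3 * ‖y‖ := by
    calc ‖x‖ ≤ ‖x - b‖ + ‖b‖ := norm_le_norm_sub_add x b
      _ ≤ 3 * ‖y‖ := by nlinarith [norm_nonneg y]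
  set e := gradient f x - p - A x
  have he : ‖e‖ ≤ ε / 18 * (3 * ‖y‖) :=
    (hgrad x hxΞ (by linarith)).trans (by gcongr)
  have hmono := inner_sub_nonneg_of_mem_subdifferential hz
    ((hdiff x hxΞ).hasGradientAt.mem_subdifferential hf)
  have hinner : ⟪w, x - y⟫ ≤ ‖A‖ * ‖x - y‖ ^ 2 + ‖e‖ * ‖x - y‖ := by
    have hsplit : z - gradient f x = w - e - A (x - y) := by
      simp only [w, e, map_sub]
      abel
    rw [hsplit, ← neg_sub x y, inner_neg_right, inner_sub_left, inner_sub_left] at hmono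
    have hA' : ⟪A (x - y), x - y⟫ ≤ ‖A‖ * ‖x - y‖ ^ 2 := by
      calc ⟪A (x - y), x - y⟫ ≤ ‖A (x - y)‖ * ‖x - y‖ := real_inner_le_norm _ _
        _ ≤ ‖A‖ * ‖x - y‖ * ‖x - y‖ := by gcongr; exact A.le_opNorm _
        _ = ‖A‖ * ‖x - y‖ ^ 2 := by ring
    linarith [real_inner_le_norm e (x - y)]
  have hw := norm_le_of_inner_le_of_norm_sub_smul_le ht (norm_nonneg A) (norm_nonneg e) hd hinner
  nlinarith [norm_nonneg y]

end FiniteDimensional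

end Subgradients

theorem statement_9_general (d : ℕ)
    (f : EuclideanSpace ℝ (Fin d) → ℝ)
    (hconv : ConvexOn ℝ Set.univ f)
    (Ξ : Set (EuclideanSpace ℝ (Fin d)))
    (hdensity : Filter.Tendsto
      (fun ρ : ℝ =>
        MeasureTheory.volume (Ξ ∩ Metric.ball 0 ρ) /
          MeasureTheory.volume (Metric.ball (0 : EuclideanSpace ℝ (Fin d)) ρ))
      (nhdsWithin 0 (Set.Ioi 0)) (nhds 1))
    (hdiff : ∀ x ∈ Ξ, DifferentiableAt ℝ f x)
    (p : EuclideanSpace ℝ (Fin d)) (hp : HasGradientAt f p 0)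
    (A : EuclideanSpace ℝ (Fin d) →L[ℝ] EuclideanSpace ℝ (Fin d))
    (hA : ∀ ε > (0 : ℝ), ∃ δ > (0 : ℝ), ∀ y ∈ Ξ, ‖y‖ < δ →
      ‖gradient f y - p - A y‖ ≤ ε * ‖y‖) :
    (∀ u v : EuclideanSpace ℝ (Fin d), ⟪A u, v⟫ = ⟪u, A v⟫) ∧
    (∀ ε > (0 : ℝ), ∃ δ > (0 : ℝ), ∀ y : EuclideanSpace ℝ (Fin d), ‖y‖ < δ →
      ∀ z : EuclideanSpace ℝ (Fin d),
        (∀ w, f y + ⟪z, w - y⟫ ≤ f w) → ‖z - p - A y‖ ≤ ε * ‖y‖) ∧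
    (∀ ε > (0 : ℝ), ∃ δ > (0 : ℝ), ∀ y : EuclideanSpace ℝ (Fin d), ‖y‖ < δ →
      |f y - f 0 - ⟪p, y⟫ - 1 / 2 * ⟪A y, y⟫| ≤ ε * ‖y‖ ^ 2) := by
  have hsub := hconv.norm_sub_le_of_mem_subdifferential (μ := MeasureTheory.volume) hdensity
    hdiff hp hA
  have hexp := hconv.expansion_of_subdifferential hsub
  refine ⟨isSymmetric_of_expansion hexp, hsub, fun ε hε => ?_⟩
  obtain ⟨δ, hδ, h⟩ := hexp ε hε
  exact ⟨δ, hδ, fun y hy => by simpa using h 0 y (by simpa using hy)⟩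

theorem statement_9 (d : ℕ) (hd : 1 ≤ d)
    (f : EuclideanSpace ℝ (Fin d) → ℝ)
    (hconv : ConvexOn ℝ Set.univ f)
    (Ξ : Set (EuclideanSpace ℝ (Fin d)))
    (hmeas : MeasurableSet Ξ)
    (h0mem : (0 : EuclideanSpace ℝ (Fin d)) ∈ Ξ)
    (hdensity : Filter.Tendsto
      (fun ρ : ℝ =>
        MeasureTheory.volume (Ξ ∩ Metric.ball 0 ρ) /
          MeasureTheory.volume (Metric.ball (0 : EuclideanSpace ℝ (Fin d)) ρ))
      (nhdsWithin 0 (Set.Ioi 0)) (nhds 1))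
    (hdiff : ∀ x ∈ Ξ, DifferentiableAt ℝ f x)
    (p : EuclideanSpace ℝ (Fin d)) (hp : HasGradientAt f p 0)
    (A : EuclideanSpace ℝ (Fin d) →L[ℝ] EuclideanSpace ℝ (Fin d))
    (hA : ∀ ε > (0 : ℝ), ∃ δ > (0 : ℝ), ∀ y ∈ Ξ, ‖y‖ < δ →
      ‖gradient f y - p - A y‖ ≤ ε * ‖y‖)
    (C : ℝ) (hC : 0 ≤ C)
    (hquad : ∀ y ∈ Ξ, f y - f 0 - ⟪p, y⟫ ≤ C * ‖y‖ ^ 2) :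
    (∀ u v : EuclideanSpace ℝ (Fin d), ⟪A u, v⟫ = ⟪u, A v⟫) ∧
    (∀ ε > (0 : ℝ), ∃ δ > (0 : ℝ), ∀ y : EuclideanSpace ℝ (Fin d), ‖y‖ < δ →
      ∀ z : EuclideanSpace ℝ (Fin d),
        (∀ w, f y + ⟪z, w - y⟫ ≤ f w) → ‖z - p - A y‖ ≤ ε * ‖y‖) ∧
    (∀ ε > (0 : ℝ), ∃ δ > (0 : ℝ), ∀ y : EuclideanSpace ℝ (Fin d), ‖y‖ < δ →
      |f y - f 0 - ⟪p, y⟫ - 1 / 2 * ⟪A y, y⟫| ≤ ε * ‖y‖ ^ 2) :=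
  statement_9_general d f hconv Ξ hdensity hdiff p hp A hA
end
end

section
/- For every x̄ ∈ Ω₀ the section M_{0→1}[x̄] of the finite contact set is nonempty, compact, and contained in Q₁. Moreover, for every compact set K ⊆ Ω₀ there exist θ ∈ (0, R) and constants a', a'' ∈ ℝ such that |y − x̄| ≤ θ and a' ≤ φ₁(y) ≤ a'' whenever x̄ ∈ K and y ∈ M_{0→1}[x̄]. -/
noncomputable section

open scoped Classical RealInnerProductSpace

/-- The backward `𝕃`-transform `φ₁^{←𝕃}(x) = sup_{y ∈ B_R(x)} (φ₁(y) − 𝕃(y−x))`. -/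
def bwTransform {d : ℕ} (R : ℝ) (Lfun φ₁ : EuclideanSpace ℝ (Fin d) → EReal)
    (x : EuclideanSpace ℝ (Fin d)) : EReal :=
  ⨆ y ∈ Metric.ball x R, φ₁ y - Lfun (y - x)

/-- `Ext_R(S)`: the union of all open balls of radius `R` whose center has
distance `> R` from `S`. -/
def extR {d : ℕ} (R : ℝ) (S : Set (EuclideanSpace ℝ (Fin d))) :
    Set (EuclideanSpace ℝ (Fin d)) :=
  ⋃ (x) (_ : ENNReal.ofReal R < EMetric.infEdist x S), Metric.ball x R

/-- The section `M_{0→1}[x]` of the finite contact set of the `𝕃`-transform pair. -/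
def MsecBT {d : ℕ} (Lfun φ₀ φ₁ : EuclideanSpace ℝ (Fin d) → EReal)
    (x : EuclideanSpace ℝ (Fin d)) : Set (EuclideanSpace ℝ (Fin d)) :=
  {y | φ₀ x ≠ ⊥ ∧ φ₀ x ≠ ⊤ ∧ φ₁ y ≠ ⊥ ∧ φ₁ y ≠ ⊤ ∧ φ₁ y = Lfun (y - x) + φ₀ x}

open Filter Topology Metric

/-!
Where `𝕃(y - x)` stays bounded, `y ↦ φ₁ y - 𝕃(y - x)` is upper semicontinuous, so the only
obstruction to attaining the supremum defining `φ₀ x` is escape of near-maximisers to the sphere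
`|y - x| = R`, where `𝕃 = +∞`. This is excluded on `Ω₀`: if `φ₀ < +∞` near `x`, then `φ₁ < +∞`
on the closed ball `B̄_R(x)`, since a point `y` there with `φ₁ y = +∞` lies in the open ball
`B_R(x')` of some nearby `x'`, forcing `φ₀ x' = +∞`. By compactness `φ₁` is then bounded above on
`⋃_{x ∈ K} B̄_R(x)`, while the lower semicontinuous `φ₀` is bounded below on `K`; so
near-maximisers have `𝕃(y - x)` bounded and stay in a ball of radius `θ < R`. On that ball the
supremum is attained and the contact set is a closed superlevel set.
-/

namespace EReal

variable {α : Type*} [TopologicalSpace α]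

lemma lowerSemicontinuous_const_sub {g : α → EReal} (hg : Continuous g) (a : EReal) :
    LowerSemicontinuous fun x => a - g x := by
  induction a with
  | bot => simpa only [bot_sub] using lowerSemicontinuous_const
  | coe a =>
    refine Continuous.lowerSemicontinuous (continuous_iff_continuousAt.2 fun x => ?_)
    exact (continuousAt_add (.inl (coe_ne_top a)) (.inl (coe_ne_bot a))).comp
      (continuous_const.prodMk hg.neg).continuousAt
  | top =>
    intro x b hb
    have hgx : g x ≠ ⊤ := fun h => by simp [h] at hb
    filter_upwards [hg.continuousAt.eventually_ne hgx] with x' hx'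
    rwa [top_sub hx', ← top_sub hgx]

lemma upperSemicontinuousOn_sub {s : Set α} {f g : α → EReal} (hf : UpperSemicontinuousOn f s)
    (hg : ContinuousOn g s) (hg_top : ∀ x ∈ s, g x ≠ ⊤) (hg_bot : ∀ x ∈ s, g x ≠ ⊥) :
    UpperSemicontinuousOn (fun x => f x - g x) s :=
  hf.add' hg.neg.upperSemicontinuousOn fun x hx =>
    continuousAt_add (.inr (by simpa using hg_top x hx)) (.inr (by simpa using hg_bot x hx))

lemma sub_eq_coe_iff {u v : EReal} (hv : v ≠ ⊥) (p : ℝ) :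
    u - v = p ↔ u ≠ ⊥ ∧ u ≠ ⊤ ∧ u = v + p := by
  induction u <;> induction v <;> simp_all [← coe_sub, ← coe_add]
  constructor <;> intro h <;> linarith

lemma le_coe_sub_of_coe_le_sub {u v : EReal} {a c : ℝ} (h : (c : EReal) ≤ u - v) (hu : u ≤ a) :
    v ≤ ((a - c : ℝ) : EReal) := by
  induction u <;> induction v <;> simp_all [← coe_sub]
  linarith

end EReal

section Semicontinuity

variable {α : Type*} [TopologicalSpace α] {s : Set α} {f : α → EReal}

lemma IsCompact.exists_forall_le_coe_of_upperSemicontinuousOn (hs : IsCompact s)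
    (hf : UpperSemicontinuousOn f s) (hf_top : ∀ x ∈ s, f x ≠ ⊤) : ∃ a : ℝ, ∀ x ∈ s, f x ≤ a := by
  rcases s.eq_empty_or_nonempty with rfl | hne
  · exact ⟨0, by simp⟩
  obtain ⟨x₀, hx₀, hmax⟩ := hf.exists_isMaxOn hne hs
  exact ⟨(f x₀).toReal, fun x hx => (hmax hx).trans (EReal.le_coe_toReal (hf_top x₀ hx₀))⟩

lemma IsCompact.exists_forall_coe_le_of_lowerSemicontinuousOn (hs : IsCompact s)
    (hf : LowerSemicontinuousOn f s) (hf_bot : ∀ x ∈ s, f x ≠ ⊥) : ∃ a : ℝ, ∀ x ∈ s, a ≤ f x := by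
  rcases s.eq_empty_or_nonempty with rfl | hne
  · exact ⟨0, by simp⟩
  obtain ⟨x₀, hx₀, hmin⟩ := hf.exists_isMinOn hne hs
  exact ⟨(f x₀).toReal, fun x hx => (EReal.coe_toReal_le (hf_bot x₀ hx₀)).trans (hmin hx)⟩

end Semicontinuity

section NormedSpace

variable {E : Type*} [NormedAddCommGroup E] {R : ℝ}

lemma exists_norm_le_of_le_coe [ProperSpace E] (hR : 0 < R) {L : E → EReal} (hL : Continuous L)
    (hL_top : ∀ z, L z < ⊤ → ‖z‖ < R) (c : ℝ) :
    ∃ θ, 0 < θ ∧ θ < R ∧ ∀ z, L z ≤ c → ‖z‖ ≤ θ := by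
  have hsub : {z | L z ≤ c} ⊆ ball 0 R := fun z hz =>
    mem_ball_zero_iff.2 (hL_top z (lt_of_le_of_lt hz (EReal.coe_lt_top c)))
  obtain ⟨r, hrR, hr⟩ := exists_lt_subset_ball (isClosed_le hL continuous_const) hsub
  exact ⟨max r (R / 2), lt_max_of_lt_right (half_pos hR), max_lt hrR (half_lt_self hR),
    fun z hz => (mem_ball_zero_iff.1 (hr hz)).le.trans (le_max_left _ _)⟩

lemma exists_mem_ball_of_mem_closedBall_of_mem_nhds [NormedSpace ℝ E] {x y : E} {U : Set E}
    (hR : 0 < R) (hU : U ∈ 𝓝 x) (hy : y ∈ closedBall x R) : ∃ x' ∈ U, y ∈ ball x' R := by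
  have hU' : ∀ᶠ t in 𝓝[>] (0 : ℝ), AffineMap.lineMap x y t ∈ U :=
    nhdsWithin_le_nhds (AffineMap.lineMap_continuous.tendsto' 0 x (by simp) hU)
  obtain ⟨t, htU, ht0, ht1⟩ := (hU'.and (Ioo_mem_nhdsGT zero_lt_one)).exists
  refine ⟨_, htU, ?_⟩
  rw [mem_ball, dist_comm, dist_lineMap_right, Real.norm_of_nonneg (by linarith)]
  calc (1 - t) * dist x y ≤ (1 - t) * R :=
        mul_le_mul_of_nonneg_left (mem_closedBall'.1 hy) (by linarith)
    _ < R := by nlinarith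

end NormedSpace

section BackwardTransform

variable {d : ℕ} {R : ℝ} {Lfun φ₁ : EuclideanSpace ℝ (Fin d) → EReal}

lemma mem_MsecBT_iff {φ₀ : EuclideanSpace ℝ (Fin d) → EReal} (hLnonneg : ∀ z, 0 ≤ Lfun z)
    {x y : EuclideanSpace ℝ (Fin d)} :
    y ∈ MsecBT Lfun φ₀ φ₁ x ↔ φ₀ x ≠ ⊥ ∧ φ₀ x ≠ ⊤ ∧ φ₁ y - Lfun (y - x) = φ₀ x := by
  by_cases h : φ₀ x ≠ ⊥ ∧ φ₀ x ≠ ⊤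
  · obtain ⟨p, hp⟩ : ∃ p : ℝ, φ₀ x = p := ⟨_, (EReal.coe_toReal h.2 h.1).symm⟩
    have hL : Lfun (y - x) ≠ ⊥ := ne_bot_of_le_ne_bot EReal.zero_ne_bot (hLnonneg _)
    simp only [MsecBT, Set.mem_ofPred_eq, hp, EReal.sub_eq_coe_iff hL]
  · simp only [MsecBT, Set.mem_ofPred_eq]
    tauto

lemma sub_le_bwTransform (hLfin : ∀ z, Lfun z < ⊤ ↔ ‖z‖ < R)
    (x y : EuclideanSpace ℝ (Fin d)) :
    φ₁ y - Lfun (y - x) ≤ bwTransform R Lfun φ₁ x := by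
  by_cases hy : y ∈ ball x R
  · exact le_iSup₂ (f := fun y (_ : y ∈ ball x R) => φ₁ y - Lfun (y - x)) y hy
  · have hL : Lfun (y - x) = ⊤ :=
      not_lt_top_iff.1 fun h => hy (mem_ball_iff_norm.2 ((hLfin _).1 h))
    simp [hL]

lemma bwTransform_eq_iSup (hLfin : ∀ z, Lfun z < ⊤ ↔ ‖z‖ < R)
    (x : EuclideanSpace ℝ (Fin d)) :
    bwTransform R Lfun φ₁ x = ⨆ y, φ₁ y - Lfun (y - x) :=
  le_antisymm (iSup₂_le fun y _ => le_iSup (fun y => φ₁ y - Lfun (y - x)) y)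
    (iSup_le (sub_le_bwTransform hLfin x))

lemma lowerSemicontinuous_bwTransform (hLfin : ∀ z, Lfun z < ⊤ ↔ ‖z‖ < R)
    (hLcont : Continuous Lfun) :
    LowerSemicontinuous (bwTransform R Lfun φ₁) := by
  rw [show bwTransform R Lfun φ₁ = _ from funext (bwTransform_eq_iSup hLfin)]
  exact lowerSemicontinuous_iSup fun y =>
    EReal.lowerSemicontinuous_const_sub (hLcont.comp (continuous_const.sub continuous_id)) (φ₁ y)

lemma lt_top_of_mem_interior_bwTransform_lt_top (hLfin : ∀ z, Lfun z < ⊤ ↔ ‖z‖ < R)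
    (hR : 0 < R) {x y : EuclideanSpace ℝ (Fin d)}
    (hx : x ∈ interior {x | bwTransform R Lfun φ₁ x < ⊤}) (hy : y ∈ closedBall x R) :
    φ₁ y < ⊤ := by
  obtain ⟨x', hx', hyx'⟩ :=
    exists_mem_ball_of_mem_closedBall_of_mem_nhds hR (mem_interior_iff_mem_nhds.1 hx) hy
  refine lt_top_iff_ne_top.2 fun htop =>
    (show bwTransform R Lfun φ₁ x' < ⊤ from hx').ne (top_le_iff.1 ?_)
  calc ⊤ = φ₁ y - Lfun (y - x') := by
        rw [htop, EReal.top_sub ((hLfin _).2 (mem_ball_iff_norm.1 hyx')).ne]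
    _ ≤ _ := sub_le_bwTransform hLfin x' y

lemma exists_forall_le_coe_of_mem_closedBall (hLfin : ∀ z, Lfun z < ⊤ ↔ ‖z‖ < R) (hR : 0 < R)
    (hφ₁ : UpperSemicontinuous φ₁) {K : Set (EuclideanSpace ℝ (Fin d))} (hK : IsCompact K)
    (hKint : K ⊆ interior {x | bwTransform R Lfun φ₁ x < ⊤}) :
    ∃ a : ℝ, ∀ x ∈ K, ∀ y ∈ closedBall x R, φ₁ y ≤ a := by
  obtain ⟨a, ha⟩ := (hK.cthickening (r := R)).exists_forall_le_coe_of_upperSemicontinuousOn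
    (hφ₁.upperSemicontinuousOn _) fun y hy => by
      rw [hK.cthickening_eq_biUnion_closedBall hR.le, Set.mem_iUnion₂] at hy
      obtain ⟨x, hx, hxy⟩ := hy
      exact (lt_top_of_mem_interior_bwTransform_lt_top hLfin hR (hKint hx) hxy).ne
  exact ⟨a, fun x hx y hy => ha y (closedBall_subset_cthickening hx R hy)⟩

lemma exists_norm_sub_le_of_coe_le_sub (hLfin : ∀ z, Lfun z < ⊤ ↔ ‖z‖ < R) (hR : 0 < R)
    (hLcont : Continuous Lfun) (hφ₁ : UpperSemicontinuous φ₁)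
    {K : Set (EuclideanSpace ℝ (Fin d))} (hK : IsCompact K)
    (hKint : K ⊆ interior {x | bwTransform R Lfun φ₁ x < ⊤}) (c : ℝ) :
    ∃ θ, 0 < θ ∧ θ < R ∧ ∀ x ∈ K, ∀ y, (c : EReal) ≤ φ₁ y - Lfun (y - x) → ‖y - x‖ ≤ θ := by
  obtain ⟨a, ha⟩ := exists_forall_le_coe_of_mem_closedBall hLfin hR hφ₁ hK hKint
  obtain ⟨θ, hθ, hθR, hθ'⟩ :=
    exists_norm_le_of_le_coe hR hLcont (fun z => (hLfin z).1) (a - c)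
  refine ⟨θ, hθ, hθR, fun x hx y hc =>
    hθ' _ (EReal.le_coe_sub_of_coe_le_sub hc (ha x hx y ?_))⟩
  have hL : Lfun (y - x) ≠ ⊤ := fun h => by simp [h] at hc
  exact mem_closedBall_iff_norm.2 ((hLfin _).1 (lt_top_iff_ne_top.2 hL)).le

lemma nonempty_and_isCompact_MsecBT (hLfin : ∀ z, Lfun z < ⊤ ↔ ‖z‖ < R) (hR : 0 < R)
    (hLcont : Continuous Lfun) (hLnonneg : ∀ z, 0 ≤ Lfun z) (hφ₁ : UpperSemicontinuous φ₁)
    {x : EuclideanSpace ℝ (Fin d)}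
    (hx : x ∈ {x | ⊥ < bwTransform R Lfun φ₁ x} ∩ interior {x | bwTransform R Lfun φ₁ x < ⊤}) :
    (MsecBT Lfun (bwTransform R Lfun φ₁) φ₁ x).Nonempty ∧
      IsCompact (MsecBT Lfun (bwTransform R Lfun φ₁) φ₁ x) := by
  set φ₀ := bwTransform R Lfun φ₁ with hφ₀
  set G := fun y => φ₁ y - Lfun (y - x)
  have hx_bot : φ₀ x ≠ ⊥ := hx.1.ne'
  have hx_top : φ₀ x ≠ ⊤ := (interior_subset hx.2 : x ∈ {x | φ₀ x < ⊤}).ne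
  obtain ⟨r, hr⟩ : ∃ r : ℝ, φ₀ x = r := ⟨_, (EReal.coe_toReal hx_top hx_bot).symm⟩
  -- near-maximisers of `G` stay in a closed ball of radius `θ < R`, on which `G` is u.s.c.
  obtain ⟨θ, hθ, hθR, hθ'⟩ := exists_norm_sub_le_of_coe_le_sub hLfin hR hLcont hφ₁
    isCompact_singleton (Set.singleton_subset_iff.2 hx.2) (r - 1)
  have hG : UpperSemicontinuousOn G (closedBall x θ) := by
    refine EReal.upperSemicontinuousOn_sub (hφ₁.upperSemicontinuousOn _)
      ((hLcont.comp (continuous_id.sub continuous_const)).continuousOn) (fun y hy => ?_)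
      (fun y _ => ne_bot_of_le_ne_bot EReal.zero_ne_bot (hLnonneg _))
    exact ((hLfin _).2 ((mem_closedBall_iff_norm.1 hy).trans_lt hθR)).ne
  have hM : MsecBT Lfun φ₀ φ₁ x = closedBall x θ ∩ G ⁻¹' Set.Ici (φ₀ x) := by
    ext y
    rw [mem_MsecBT_iff hLnonneg]
    refine ⟨fun ⟨_, _, hy⟩ => ⟨mem_closedBall_iff_norm.2 (hθ' x rfl y ?_), hy.ge⟩,
      fun ⟨_, hy⟩ => ⟨hx_bot, hx_top, le_antisymm (sub_le_bwTransform hLfin x y) hy⟩⟩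
    rw [hy, hr, EReal.coe_le_coe_iff]
    linarith
  obtain ⟨y₀, hy₀, hmax⟩ :=
    hG.exists_isMaxOn (nonempty_closedBall.2 hθ.le) (isCompact_closedBall x θ)
  have hsup : φ₀ x ≤ max (G y₀) ((r - 1 : ℝ) : EReal) := by
    rw [hφ₀, bwTransform_eq_iSup hLfin]
    refine iSup_le fun y => ?_
    by_cases hy : ((r - 1 : ℝ) : EReal) ≤ G y
    · exact le_max_of_le_left (hmax (mem_closedBall_iff_norm.2 (hθ' x rfl y hy)))
    · exact le_max_of_le_right (not_le.1 hy).le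
  have hy₀M : y₀ ∈ closedBall x θ ∩ G ⁻¹' Set.Ici (φ₀ x) := by
    refine ⟨hy₀, (le_max_iff.1 hsup).resolve_right fun h => ?_⟩
    rw [hr, EReal.coe_le_coe_iff] at h
    linarith
  rw [hM]
  obtain ⟨v, hv, hv'⟩ := upperSemicontinuousOn_iff_preimage_Ici.1 hG (φ₀ x)
  exact ⟨⟨y₀, hy₀M⟩, hv' ▸ (isCompact_closedBall x θ).inter_right hv⟩

end BackwardTransform

theorem statement_12_general (d : ℕ) (R : ℝ) (hR : 0 < R)
    (Lfun : EuclideanSpace ℝ (Fin d) → EReal)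
    (hLcont : Continuous Lfun)
    (hLnonneg : ∀ z, 0 ≤ Lfun z)
    (hLfin : ∀ z, Lfun z < ⊤ ↔ ‖z‖ < R)
    (φ₁ : EuclideanSpace ℝ (Fin d) → EReal)
    (hφ₁ : UpperSemicontinuous φ₁)
    (φ₀ : EuclideanSpace ℝ (Fin d) → EReal)
    (hφ₀ : φ₀ = bwTransform R Lfun φ₁) :
    (∀ xbar ∈ {x | ⊥ < φ₀ x} ∩ interior {x | φ₀ x < ⊤},
      (MsecBT Lfun φ₀ φ₁ xbar).Nonempty ∧
      IsCompact (MsecBT Lfun φ₀ φ₁ xbar) ∧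
      MsecBT Lfun φ₀ φ₁ xbar ⊆ {y | ⊥ < φ₁ y}) ∧
    ∀ K : Set (EuclideanSpace ℝ (Fin d)), IsCompact K →
      K ⊆ {x | ⊥ < φ₀ x} ∩ interior {x | φ₀ x < ⊤} →
      ∃ θ : ℝ, 0 < θ ∧ θ < R ∧ ∃ a' a'' : ℝ,
        ∀ xbar ∈ K, ∀ y ∈ MsecBT Lfun φ₀ φ₁ xbar,
          ‖y - xbar‖ ≤ θ ∧ ((a' : ℝ) : EReal) ≤ φ₁ y ∧ φ₁ y ≤ ((a'' : ℝ) : EReal) := by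
  subst hφ₀
  refine ⟨fun x hx => ?_, fun K hK hKΩ => ?_⟩
  · obtain ⟨hne, hcpt⟩ := nonempty_and_isCompact_MsecBT hLfin hR hLcont hLnonneg hφ₁ hx
    exact ⟨hne, hcpt, fun y hy => bot_lt_iff_ne_bot.2 hy.2.2.1⟩
  obtain ⟨m, hm⟩ := hK.exists_forall_coe_le_of_lowerSemicontinuousOn
    ((lowerSemicontinuous_bwTransform hLfin hLcont).lowerSemicontinuousOn K)
    fun x hx => (hKΩ hx).1.ne'
  obtain ⟨a, ha⟩ := exists_forall_le_coe_of_mem_closedBall hLfin hR hφ₁ hK fun x hx => (hKΩ hx).2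
  obtain ⟨θ, hθ, hθR, hθ'⟩ :=
    exists_norm_sub_le_of_coe_le_sub hLfin hR hLcont hφ₁ hK (fun x hx => (hKΩ hx).2) m
  refine ⟨θ, hθ, hθR, m, a, fun x hx y hy => ?_⟩
  have hdist : ‖y - x‖ ≤ θ := hθ' x hx y (((mem_MsecBT_iff hLnonneg).1 hy).2.2 ▸ hm x hx)
  refine ⟨hdist, ?_, ha x hx y (mem_closedBall_iff_norm.2 (hdist.trans hθR.le))⟩
  calc (m : EReal) = 0 + m := (zero_add _).symm
    _ ≤ Lfun (y - x) + bwTransform R Lfun φ₁ x := add_le_add (hLnonneg _) (hm x hx)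
    _ = φ₁ y := hy.2.2.2.2.symm

theorem statement_12 (d : ℕ) (hd : 1 ≤ d) (R : ℝ) (hR : 0 < R)
    (Lfun : EuclideanSpace ℝ (Fin d) → EReal)
    (hLcont : Continuous Lfun)
    (hLnonneg : ∀ z, 0 ≤ Lfun z)
    (hL0 : Lfun 0 = 0)
    (hLfin : ∀ z, Lfun z < ⊤ ↔ ‖z‖ < R)
    (L : EuclideanSpace ℝ (Fin d) → ℝ)
    (hLL : ∀ z ∈ Metric.ball (0 : EuclideanSpace ℝ (Fin d)) R, Lfun z = ((L z : ℝ) : EReal))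
    (hLC2 : ContDiffOn ℝ 2 L (Metric.ball 0 R))
    (lamStar : ℝ) (hlam : 0 < lamStar)
    (hLconv : ∀ z ∈ Metric.ball (0 : EuclideanSpace ℝ (Fin d)) R,
      ∀ v : EuclideanSpace ℝ (Fin d),
        lamStar * ‖v‖ ^ 2 ≤ fderiv ℝ (fderiv ℝ L) z v v)
    (φ₁ : EuclideanSpace ℝ (Fin d) → EReal)
    (hφ₁ : UpperSemicontinuous φ₁)
    (φ₀ : EuclideanSpace ℝ (Fin d) → EReal)
    (hφ₀ : φ₀ = bwTransform R Lfun φ₁) :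
    (∀ xbar ∈ {x | ⊥ < φ₀ x} ∩ interior {x | φ₀ x < ⊤},
      (MsecBT Lfun φ₀ φ₁ xbar).Nonempty ∧
      IsCompact (MsecBT Lfun φ₀ φ₁ xbar) ∧
      MsecBT Lfun φ₀ φ₁ xbar ⊆ {y | ⊥ < φ₁ y}) ∧
    ∀ K : Set (EuclideanSpace ℝ (Fin d)), IsCompact K →
      K ⊆ {x | ⊥ < φ₀ x} ∩ interior {x | φ₀ x < ⊤} →
      ∃ θ : ℝ, 0 < θ ∧ θ < R ∧ ∃ a' a'' : ℝ,
        ∀ xbar ∈ K, ∀ y ∈ MsecBT Lfun φ₀ φ₁ xbar,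
          ‖y - xbar‖ ≤ θ ∧ ((a' : ℝ) : EReal) ≤ φ₁ y ∧ φ₁ y ≤ ((a'' : ℝ) : EReal) :=
  statement_12_general d R hR Lfun hLcont hLnonneg hLfin φ₁ hφ₁ φ₀ hφ₀
end
end

section
/- Let q, δ : I → (0, ∞) be twice differentiable, and suppose there exist functions ξ : I → ℝ, g : I → ℝ^d, and A : I → ℝ^{d×d} such that on I: q' = 2 ξ q, q'' = |g|² q, δ' = tr(A) δ, and δ'' = ( (tr A)² − |A|_F² − 4 |g|² − 4 ξ tr A ) δ. Define γ := q and ρ := q δ^{1/d}. Then for all t ∈ I one has γ''(t)/γ(t) ≥ 0 and ρ''(t)/ρ(t) ≤ (1 − 4/d) γ''(t)/γ(t), and for d = 1 the latter holds with equality. -/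
/-!
Write `c = 1/d`, `T = tr A`, `S = |A|_F²`. Dividing the second derivative of `ρ = q δ^c` by `ρ`
and inserting the four differential relations, all `ξ`-terms cancel and
`ρ''/ρ = (1 - 4c)|g|² + c²T² - cS`, while `γ''/γ = q''/q = |g|² ≥ 0`. By Cauchy–Schwarz on the
diagonal, `T² ≤ d · Σᵢ Aᵢᵢ² ≤ d S`, i.e. `c²T² ≤ cS`; for `d = 1` both sides equal `A₀₀²`.
-/

open Filter Topology

namespace Matrix

variable {n : Type*} [Fintype n]

theorem sq_trace_le_card_mul_sum_sq (A : Matrix n n ℝ) :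
    A.trace ^ 2 ≤ Fintype.card n * ∑ i, ∑ j, A i j ^ 2 :=
  calc A.trace ^ 2 ≤ Fintype.card n * ∑ i, A i i ^ 2 := by
        simpa [trace] using sq_sum_le_card_mul_sum_sq (s := Finset.univ) (f := fun i => A i i)
    _ ≤ Fintype.card n * ∑ i, ∑ j, A i j ^ 2 := by
        gcongr with i
        exact Finset.single_le_sum (fun j _ => sq_nonneg (A i j)) (Finset.mem_univ i)

theorem sq_trace_div_card_le (A : Matrix n n ℝ) :
    (A.trace / Fintype.card n) ^ 2 ≤ (∑ i, ∑ j, A i j ^ 2) / Fintype.card n := by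
  rcases (Nat.cast_nonneg (Fintype.card n) : (0 : ℝ) ≤ _).eq_or_lt with hN | hN
  · simp [← hN]
  · rw [div_pow, div_le_div_iff₀ (by positivity) hN]
    nlinarith [A.sq_trace_le_card_mul_sum_sq]

end Matrix

section MulRpow

variable {f h : ℝ → ℝ} {t c : ℝ}

theorem deriv_mul_rpow_eventuallyEq (hf : ∀ᶠ u in 𝓝 t, DifferentiableAt ℝ f u)
    (hh : ∀ᶠ u in 𝓝 t, DifferentiableAt ℝ h u ∧ 0 < h u) :
    deriv (fun u => f u * h u ^ c) =ᶠ[𝓝 t]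
      fun u => deriv f u * h u ^ c + f u * (deriv h u * c * h u ^ (c - 1)) := by
  filter_upwards [hf, hh] with u hfu ⟨hhu, hpos⟩
  exact (hfu.hasDerivAt.mul (hhu.hasDerivAt.rpow_const (Or.inl hpos.ne'))).deriv

theorem deriv_deriv_mul_rpow (hf : ∀ᶠ u in 𝓝 t, DifferentiableAt ℝ f u)
    (hh : ∀ᶠ u in 𝓝 t, DifferentiableAt ℝ h u ∧ 0 < h u)
    (hf' : DifferentiableAt ℝ (deriv f) t) (hh' : DifferentiableAt ℝ (deriv h) t) :
    deriv (deriv (fun u => f u * h u ^ c)) t =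
      deriv (deriv f) t * h t ^ c + 2 * deriv f t * (deriv h t * c * h t ^ (c - 1)) +
        f t * (deriv (deriv h) t * c * h t ^ (c - 1) +
          deriv h t * c * (deriv h t * (c - 1) * h t ^ (c - 1 - 1))) := by
  obtain ⟨hht, hpos⟩ := hh.self_of_nhds
  have hpow : ∀ e, HasDerivAt (fun u => h u ^ e) (deriv h t * e * h t ^ (e - 1)) t :=
    fun e => hht.hasDerivAt.rpow_const (Or.inl hpos.ne')
  rw [(deriv_mul_rpow_eventuallyEq hf hh).deriv_eq]
  refine ((hf'.hasDerivAt.mul (hpow c)).add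
    (hf.self_of_nhds.hasDerivAt.mul ((hh'.hasDerivAt.mul_const c).mul (hpow (c - 1))))).deriv.trans ?_
  simp only [Pi.mul_apply]
  ring

theorem deriv_deriv_mul_rpow_div (hf : ∀ᶠ u in 𝓝 t, DifferentiableAt ℝ f u)
    (hh : ∀ᶠ u in 𝓝 t, DifferentiableAt ℝ h u ∧ 0 < h u)
    (hf' : DifferentiableAt ℝ (deriv f) t) (hh' : DifferentiableAt ℝ (deriv h) t)
    (hf0 : f t ≠ 0) :
    deriv (deriv (fun u => f u * h u ^ c)) t / (f t * h t ^ c) =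
      deriv (deriv f) t / f t + 2 * c * (deriv f t / f t) * (deriv h t / h t) +
        c * (deriv (deriv h) t / h t) + c * (c - 1) * (deriv h t / h t) ^ 2 := by
  have hpos := hh.self_of_nhds.2
  have hpow := Real.rpow_pos_of_pos hpos c
  rw [deriv_deriv_mul_rpow hf hh hf' hh', Real.rpow_sub_one hpos.ne' (c - 1),
    Real.rpow_sub_one hpos.ne' c]
  field_simp
  ring

end MulRpow

theorem statement_17_general (d : ℕ)
    (I : Set ℝ) (hIopen : IsOpen I)
    (q δ : ℝ → ℝ)
    (hqpos : ∀ t ∈ I, 0 < q t) (hδpos : ∀ t ∈ I, 0 < δ t)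
    (hqdiff : ∀ t ∈ I, DifferentiableAt ℝ q t ∧ DifferentiableAt ℝ (deriv q) t)
    (hδdiff : ∀ t ∈ I, DifferentiableAt ℝ δ t ∧ DifferentiableAt ℝ (deriv δ) t)
    (ξ : ℝ → ℝ) (g : ℝ → EuclideanSpace ℝ (Fin d))
    (A : ℝ → Matrix (Fin d) (Fin d) ℝ)
    (hq' : ∀ t ∈ I, deriv q t = 2 * ξ t * q t)
    (hq'' : ∀ t ∈ I, deriv (deriv q) t = ‖g t‖ ^ 2 * q t)
    (hδ' : ∀ t ∈ I, deriv δ t = (A t).trace * δ t)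
    (hδ'' : ∀ t ∈ I, deriv (deriv δ) t =
      ((A t).trace ^ 2 - (∑ i, ∑ j, (A t i j) ^ 2) - 4 * ‖g t‖ ^ 2 -
        4 * ξ t * (A t).trace) * δ t) :
    ∀ t ∈ I,
      0 ≤ deriv (deriv q) t / q t ∧
      deriv (deriv (fun u => q u * δ u ^ (1 / (d : ℝ)))) t /
          (q t * δ t ^ (1 / (d : ℝ))) ≤
        (1 - 4 / (d : ℝ)) * (deriv (deriv q) t / q t) ∧
      (d = 1 →
        deriv (deriv (fun u => q u * δ u ^ (1 / (d : ℝ)))) t /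
            (q t * δ t ^ (1 / (d : ℝ))) =
          (1 - 4 / (d : ℝ)) * (deriv (deriv q) t / q t)) := by
  intro t ht
  have hI : ∀ᶠ u in 𝓝 t, u ∈ I := hIopen.mem_nhds ht
  have hq0 := (hqpos t ht).ne'
  have hδ0 := (hδpos t ht).ne'
  have hγ : deriv (deriv q) t / q t = ‖g t‖ ^ 2 := by
    rw [hq'' t ht, mul_div_cancel_right₀ _ hq0]
  have hρ := deriv_deriv_mul_rpow_div (c := 1 / (d : ℝ))
    (hI.mono fun u hu => (hqdiff u hu).1) (hI.mono fun u hu => ⟨(hδdiff u hu).1, hδpos u hu⟩)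
    (hqdiff t ht).2 (hδdiff t ht).2 hq0
  rw [hγ, hq' t ht, hδ' t ht, hδ'' t ht, mul_div_cancel_right₀ _ hq0,
    mul_div_cancel_right₀ _ hδ0, mul_div_cancel_right₀ _ hδ0] at hρ
  replace hρ : deriv (deriv (fun u => q u * δ u ^ (1 / (d : ℝ)))) t /
      (q t * δ t ^ (1 / (d : ℝ))) = (1 - 4 / (d : ℝ)) * ‖g t‖ ^ 2 +
        (((A t).trace / d) ^ 2 - (∑ i, ∑ j, A t i j ^ 2) / d) := by
    rw [hρ]; ring
  rw [hγ, hρ]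
  refine ⟨sq_nonneg _, ?_, fun hd => ?_⟩
  · simpa using (A t).sq_trace_div_card_le
  · subst hd
    simp [Matrix.trace_fin_one]

theorem statement_17 (d : ℕ) (hd : 1 ≤ d)
    (I : Set ℝ) (hIopen : IsOpen I) (hIconv : Convex ℝ I)
    (q δ : ℝ → ℝ)
    (hqpos : ∀ t ∈ I, 0 < q t) (hδpos : ∀ t ∈ I, 0 < δ t)
    (hqdiff : ∀ t ∈ I, DifferentiableAt ℝ q t ∧ DifferentiableAt ℝ (deriv q) t)
    (hδdiff : ∀ t ∈ I, DifferentiableAt ℝ δ t ∧ DifferentiableAt ℝ (deriv δ) t)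
    (ξ : ℝ → ℝ) (g : ℝ → EuclideanSpace ℝ (Fin d))
    (A : ℝ → Matrix (Fin d) (Fin d) ℝ)
    (hq' : ∀ t ∈ I, deriv q t = 2 * ξ t * q t)
    (hq'' : ∀ t ∈ I, deriv (deriv q) t = ‖g t‖ ^ 2 * q t)
    (hδ' : ∀ t ∈ I, deriv δ t = (A t).trace * δ t)
    (hδ'' : ∀ t ∈ I, deriv (deriv δ) t =
      ((A t).trace ^ 2 - (∑ i, ∑ j, (A t i j) ^ 2) - 4 * ‖g t‖ ^ 2 -
        4 * ξ t * (A t).trace) * δ t) :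
    ∀ t ∈ I,
      0 ≤ deriv (deriv q) t / q t ∧
      deriv (deriv (fun u => q u * δ u ^ (1 / (d : ℝ)))) t /
          (q t * δ t ^ (1 / (d : ℝ))) ≤
        (1 - 4 / (d : ℝ)) * (deriv (deriv q) t / q t) ∧
      (d = 1 →
        deriv (deriv (fun u => q u * δ u ^ (1 / (d : ℝ)))) t /
            (q t * δ t ^ (1 / (d : ℝ))) =
          (1 - 4 / (d : ℝ)) * (deriv (deriv q) t / q t)) :=
  statement_17_general d I hIopen q δ hqpos hδpos hqdiff hδdiff ξ g A hq' hq'' hδ' hδ''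
end
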